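/- arXiv:1905.01130 — 6 statements merged into one kernel-verified Lean document; each statement's English description precedes it below -/
import Mathlib

section
/- Let [X,d,m] be a metric random walk space with an invariant and reversible σ-finite measure ν. For every u ∈ L¹(X,ν), writing E_t(u) := {x ∈ X : u(x) > t} for t ∈ ℝ, the coarea formula holds: TV_m(u) = ∫_{−∞}^{+∞} P_m(E_t(u)) dt. -/
/-!
Writing `(u x - u y)⁺` as the Lebesgue measure of `[u y, u x)` and applying Tonelli,
`∫ P_m(E_t(u)) dt` becomes the integral of `(u x - u y)⁺` against the measure `ν ⊗ m_x` on `X × X`.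
Reversibility says exactly that `ν ⊗ m_x` is invariant under `(x, y) ↦ (y, x)`, so the positive and
negative parts of `u x - u y` contribute equally to `∫∫ |u y - u x| dm_x(y) dν(x)`.
-/

open MeasureTheory ENNReal Filter Set Topology

noncomputable section

variable {X : Type*} [MeasurableSpace X]

/-- The double integral `∫∫ |u(y) − u(x)| dm_x(y) dν(x)`. -/
def nlEnergy (m : X → Measure X) (ν : Measure X) (u : X → ℝ) : ℝ≥0∞ :=
  ∫⁻ x, ∫⁻ y, ENNReal.ofReal |u y - u x| ∂(m x) ∂ν

/-- The `m`-total variation `TV_m(u) = (1/2) ∫∫ |u(y) − u(x)| dm_x(y) dν(x)`. -/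
def TVm (m : X → Measure X) (ν : Measure X) (u : X → ℝ) : ℝ≥0∞ :=
  2⁻¹ * nlEnergy m ν u

/-- `u ∈ BV_m(X,ν)`: a measurable function with finite nonlocal energy. -/
def MemBVm (m : X → Measure X) (ν : Measure X) (u : X → ℝ) : Prop :=
  Measurable u ∧ nlEnergy m ν u < ⊤

/-- `u ∈ BV_m^0(X,ν)`: `u ∈ BV_m(X,ν)` vanishing a.e. outside a set `A` with `0 < ν A < ν X`. -/
def MemBVm0 (m : X → Measure X) (ν : Measure X) (u : X → ℝ) : Prop :=
  MemBVm m ν u ∧ ∃ A : Set X, MeasurableSet A ∧ 0 < ν A ∧ ν A < ν Set.univ ∧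
    ∀ᵐ x ∂ν, x ∉ A → u x = 0

/-- The `m`-interaction `L_m(A,B) = ∫_A m_x(B) dν(x)`. -/
def Lm (m : X → Measure X) (ν : Measure X) (A B : Set X) : ℝ≥0∞ :=
  ∫⁻ x in A, m x B ∂ν

/-- The `m`-perimeter `P_m(E) = L_m(E, X∖E)`. -/
def Pm (m : X → Measure X) (ν : Measure X) (E : Set X) : ℝ≥0∞ :=
  Lm m ν E Eᶜ

/-- `ν` is invariant and reversible for `m`. -/
def Reversible (m : X → Measure X) (ν : Measure X) : Prop :=
  ∀ F : X → X → ℝ≥0∞, Measurable (Function.uncurry F) →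
    ∫⁻ x, ∫⁻ y, F x y ∂(m x) ∂ν = ∫⁻ y, ∫⁻ x, F x y ∂(m y) ∂ν

/-- `x ↦ m_x(A)` is measurable for every Borel set `A`. -/
def MeasurableKernel (m : X → Measure X) : Prop :=
  ∀ A : Set X, MeasurableSet A → Measurable fun x => m x A

/-- The measure `ν ⊗ m_x` on `X × X`, given by `(ν ⊗ m_x)(U) = ∫ m_x(U_x) dν(x)`. -/
def nuOtimes (m : X → Measure X) (ν : Measure X) : Measure (X × X) :=
  ν.bind fun x => (m x).map (Prod.mk x)

/-- The `m`-divergence `div_m z (x) = (1/2) ∫ (z(x,y) − z(y,x)) dm_x(y)`. -/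
def divm (m : X → Measure X) (z : X → X → ℝ) (x : X) : ℝ :=
  2⁻¹ * ∫ y, (z x y - z y x) ∂(m x)

/-- The multivalued sign function. -/
def signSet (r : ℝ) : Set ℝ :=
  if 0 < r then {1} else if r < 0 then {-1} else Set.Icc (-1) 1

/-- `[X,d,m]` is `m`-connected with respect to `ν`. -/
def MConnected (m : X → Measure X) (ν : Measure X) : Prop :=
  ∀ A B : Set X, MeasurableSet A → MeasurableSet B → 0 < ν A → 0 < ν B →
    A ∪ B = Set.univ → 0 < Lm m ν A B

/-- `ν` is ergodic for `m`. -/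
def ErgodicRW (m : X → Measure X) (ν : Measure X) : Prop :=
  ∀ B : Set X, MeasurableSet B → (∀ x ∈ B, m x B = 1) → ν B = 0 ∨ ν B = 1

/-- `v ∈ ∂F_m(u)`, where `F_m(w) = TV_m(w)` for `w ∈ L² ∩ BV_m` and `+∞` otherwise.
This unfolds the subdifferential inequality: it forces `F_m(u) < ∞` and the inequality
is trivial for test functions `w` with `F_m(w) = ∞`. -/
def subdiffFm (m : X → Measure X) (ν : Measure X) (u v : X → ℝ) : Prop :=
  MemLp u 2 ν ∧ MemLp v 2 ν ∧ MemBVm m ν u ∧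
    ∀ w : X → ℝ, MemLp w 2 ν → MemBVm m ν w →
      (TVm m ν u).toReal + ∫ x, v x * (w x - u x) ∂ν ≤ (TVm m ν w).toReal

/-- `(λ, u)` is an `m`-eigenpair of the 1-Laplacian. -/
def IsEigenpair (m : X → Measure X) (ν : Measure X) (lam : ℝ) (u : X → ℝ) : Prop :=
  eLpNorm u 1 ν = 1 ∧
    ∃ ξ : X → ℝ, MemLp ξ ⊤ ν ∧ (∀ᵐ x ∂ν, ξ x ∈ signSet (u x)) ∧
      subdiffFm m ν u fun x => lam * ξ x

/-- The `m`-Cheeger constant of a set `Ω`. -/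
def h1m (m : X → Measure X) (ν : Measure X) (Ω : Set X) : ℝ≥0∞ :=
  sInf {r : ℝ≥0∞ | ∃ E : Set X, MeasurableSet E ∧ E ⊆ Ω ∧ 0 < ν E ∧ r = Pm m ν E / ν E}

/-- `Ω` is `m`-calibrable. -/
def Calibrable (m : X → Measure X) (ν : Measure X) (Ω : Set X) : Prop :=
  h1m m ν Ω = Pm m ν Ω / ν Ω

/-- The `m`-Cheeger constant of the whole space (for a probability measure `ν`). -/
def cheegerConst (m : X → Measure X) (ν : Measure X) : ℝ≥0∞ :=
  sInf {r : ℝ≥0∞ | ∃ D : Set X, MeasurableSet D ∧ 0 < ν D ∧ ν D < 1 ∧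
    r = Pm m ν D / min (ν D) (ν Dᶜ)}

/-- The Dirichlet energy functional `H_m(u) = (1/2) ∫∫ (u(x) − u(y))² dm_x(y) dν(x)`. -/
def Hm (m : X → Measure X) (ν : Measure X) (u : X → ℝ) : ℝ≥0∞ :=
  2⁻¹ * ∫⁻ x, ∫⁻ y, ENNReal.ofReal ((u x - u y) ^ 2) ∂(m x) ∂ν

end

open ProbabilityTheory

theorem ENNReal.ofReal_abs_eq_ofReal_add_ofReal_neg (a : ℝ) :
    ENNReal.ofReal |a| = ENNReal.ofReal a + ENNReal.ofReal (-a) := by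
  rcases le_total 0 a with h | h
  · simp [abs_of_nonneg h, ENNReal.ofReal_of_nonpos (neg_nonpos.2 h)]
  · simp [abs_of_nonpos h, ENNReal.ofReal_of_nonpos h]

theorem lintegral_measure_setOf_le_and_lt {Y : Type*} [MeasurableSpace Y] (μ : Measure Y)
    [SFinite μ] {f g : Y → ℝ} (hf : Measurable f) (hg : Measurable g) :
    ∫⁻ t, μ {y | g y ≤ t ∧ t < f y} = ∫⁻ y, ENNReal.ofReal (f y - g y) ∂μ := by
  have hS : MeasurableSet {p : ℝ × Y | g p.2 ≤ p.1 ∧ p.1 < f p.2} :=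
    (measurableSet_le (hg.comp measurable_snd) measurable_fst).inter
      (measurableSet_lt measurable_fst (hf.comp measurable_snd))
  simp_rw [← Real.volume_Ico]
  exact (Measure.prod_apply hS).symm.trans (Measure.prod_apply_symm hS)

namespace MeasurableKernel

variable {X : Type*} [MeasurableSpace X] {m : X → Measure X}

def toKernel (hm : MeasurableKernel m) : Kernel X X :=
  ⟨m, Measure.measurable_of_measurable_coe m hm⟩

theorem isMarkovKernel_toKernel (hm : MeasurableKernel m)
    (hprob : ∀ x, IsProbabilityMeasure (m x)) : IsMarkovKernel hm.toKernel :=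
  ⟨hprob⟩

variable (hm : MeasurableKernel m) {ν : Measure X} [SFinite ν] [IsSFiniteKernel hm.toKernel]

theorem Lm_eq_compProd_prod {A B : Set X} (hA : MeasurableSet A) (hB : MeasurableSet B) :
    Lm m ν A B = (ν ⊗ₘ hm.toKernel) (A ×ˢ B) :=
  (Measure.compProd_apply_prod (κ := hm.toKernel) hA hB).symm

theorem Pm_setOf_lt_eq_compProd {u : X → ℝ} (hu : Measurable u) (t : ℝ) :
    Pm m ν {x | t < u x} = (ν ⊗ₘ hm.toKernel) {p | u p.2 ≤ t ∧ t < u p.1} := by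
  have hE : MeasurableSet {x | t < u x} := measurableSet_lt measurable_const hu
  rw [Pm, hm.Lm_eq_compProd_prod hE hE.compl]
  congr 1
  ext p
  simp [not_lt, and_comm]

theorem lintegral_compProd_swap (hrev : Reversible m ν) {f : X × X → ℝ≥0∞} (hf : Measurable f) :
    ∫⁻ p, f p.swap ∂(ν ⊗ₘ hm.toKernel) = ∫⁻ p, f p ∂(ν ⊗ₘ hm.toKernel) := by
  rw [Measure.lintegral_compProd hf,
    Measure.lintegral_compProd (f := fun p => f p.swap) (hf.comp measurable_swap)]
  exact hrev (fun x y => f (y, x)) (hf.comp measurable_swap)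

theorem nlEnergy_eq_two_mul (hrev : Reversible m ν) {u : X → ℝ} (hu : Measurable u) :
    nlEnergy m ν u = 2 * ∫⁻ p, ENNReal.ofReal (u p.1 - u p.2) ∂(ν ⊗ₘ hm.toKernel) := by
  have hpos : Measurable fun p : X × X => ENNReal.ofReal (u p.1 - u p.2) :=
    ((hu.comp measurable_fst).sub (hu.comp measurable_snd)).ennreal_ofReal
  have hneg : Measurable fun p : X × X => ENNReal.ofReal (u p.2 - u p.1) :=
    hpos.comp measurable_swap
  have hswap := hm.lintegral_compProd_swap hrev hpos
  simp only [Prod.fst_swap, Prod.snd_swap] at hswap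
  calc nlEnergy m ν u
      = ∫⁻ p, ENNReal.ofReal |u p.2 - u p.1| ∂(ν ⊗ₘ hm.toKernel) :=
        (Measure.lintegral_compProd (κ := hm.toKernel)
          (f := fun p => ENNReal.ofReal |u p.2 - u p.1|) (by fun_prop)).symm
    _ = ∫⁻ p, ENNReal.ofReal (u p.2 - u p.1) + ENNReal.ofReal (u p.1 - u p.2)
          ∂(ν ⊗ₘ hm.toKernel) := by
        simp_rw [ENNReal.ofReal_abs_eq_ofReal_add_ofReal_neg, neg_sub]
    _ = 2 * ∫⁻ p, ENNReal.ofReal (u p.1 - u p.2) ∂(ν ⊗ₘ hm.toKernel) := by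
        rw [lintegral_add_left hneg, hswap, two_mul]

end MeasurableKernel

theorem coarea_formula_general
    {X : Type*} [MeasurableSpace X]
    (m : X → Measure X) (hprob : ∀ x, IsProbabilityMeasure (m x))
    (hker : MeasurableKernel m)
    (ν : Measure X) [SigmaFinite ν] (hrev : Reversible m ν)
    (u : X → ℝ) (hu : Measurable u) :
    TVm m ν u = ∫⁻ t : ℝ, Pm m ν {x | t < u x} := by
  have := hker.isMarkovKernel_toKernel hprob
  calc TVm m ν u = ∫⁻ p, ENNReal.ofReal (u p.1 - u p.2) ∂(ν ⊗ₘ hker.toKernel) := by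
        rw [TVm, hker.nlEnergy_eq_two_mul hrev hu, ← mul_assoc,
          ENNReal.inv_mul_cancel two_ne_zero ENNReal.ofNat_ne_top, one_mul]
    _ = ∫⁻ t, (ν ⊗ₘ hker.toKernel) {p | u p.2 ≤ t ∧ t < u p.1} :=
        (lintegral_measure_setOf_le_and_lt _ (hu.comp measurable_fst)
          (hu.comp measurable_snd)).symm
    _ = ∫⁻ t, Pm m ν {x | t < u x} :=
        lintegral_congr fun t => (hker.Pm_setOf_lt_eq_compProd hu t).symm

/-- **Coarea formula.** For every `u ∈ L¹(X,ν)`,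
`TV_m(u) = ∫_{−∞}^{+∞} P_m(E_t(u)) dt` where `E_t(u) = {x : u(x) > t}`. -/
theorem coarea_formula
    {X : Type*} [MetricSpace X] [PolishSpace X] [MeasurableSpace X] [BorelSpace X]
    (m : X → Measure X) (hprob : ∀ x, IsProbabilityMeasure (m x))
    (hker : MeasurableKernel m)
    (ν : Measure X) [SigmaFinite ν] (hrev : Reversible m ν)
    (u : X → ℝ) (hu : Measurable u) (huint : Integrable u ν) :
    TVm m ν u = ∫⁻ t : ℝ, Pm m ν {x | t < u x} :=
  coarea_formula_general m hprob hker ν hrev u hu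
end

section
/- Let [X,d,m] be a metric random walk space with an invariant and reversible probability measure ν which is ergodic. Then for every u ∈ BV_m(X,ν), TV_m(u) = 0 if and only if u is ν-a.e. equal to a constant. -/
open MeasureTheory ENNReal Filter Set Topology

/-!
Vanishing of `TV_m(u)` says that `u(y) = u(x)` for `m_x`-a.e. `y`, for `ν`-a.e. `x`. Hence every
level set `u⁻¹' U` is invariant for the random walk up to a `ν`-null set. Since `ν` is invariant, a
null set `N` is `m_x`-null for `ν`-a.e. `x`; iterating this countably often enlarges `N` to a null
set whose complement the walk never leaves, and removing it turns `u⁻¹' U` into a genuinely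
invariant set. Ergodicity then gives `ν (u⁻¹' U) ∈ {0, 1}` for every Borel `U`, so `u` is a.e.
constant.
-/

section

variable {X : Type*} [MeasurableSpace X] {m : X → Measure X} {ν : Measure X}

lemma MeasurableKernel.measurable_lintegral (hprob : ∀ x, IsProbabilityMeasure (m x))
    (hker : MeasurableKernel m) {f : X → X → ℝ≥0∞} (hf : Measurable (Function.uncurry f)) :
    Measurable fun x => ∫⁻ y, f x y ∂(m x) :=
  let κ : ProbabilityTheory.Kernel X X :=
    ⟨m, Measure.measurable_of_measurable_coe _ hker⟩
  have : ProbabilityTheory.IsMarkovKernel κ := ⟨hprob⟩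
  hf.lintegral_kernel_prod_right (κ := κ)

lemma nlEnergy_eq_zero_iff (hprob : ∀ x, IsProbabilityMeasure (m x)) (hker : MeasurableKernel m)
    {u : X → ℝ} (hu : Measurable u) :
    nlEnergy m ν u = 0 ↔ ∀ᵐ x ∂ν, ∀ᵐ y ∂(m x), u y = u x := by
  have hf : Measurable (Function.uncurry fun x y => ENNReal.ofReal |u y - u x|) :=
    ((hu.comp measurable_snd).sub (hu.comp measurable_fst)).abs.ennreal_ofReal
  rw [nlEnergy, lintegral_eq_zero_iff (hker.measurable_lintegral hprob hf)]
  refine eventually_congr (Eventually.of_forall fun x => ?_)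
  have hfx : Measurable fun y => ENNReal.ofReal |u y - u x| :=
    (hu.sub measurable_const).abs.ennreal_ofReal
  rw [Pi.zero_apply, lintegral_eq_zero_iff hfx]
  simp only [EventuallyEq, Pi.zero_apply, ofReal_eq_zero, abs_nonpos_iff, sub_eq_zero]

namespace Reversible

lemma lintegral_measure_apply (hprob : ∀ x, IsProbabilityMeasure (m x)) (hrev : Reversible m ν)
    {A : Set X} (hA : MeasurableSet A) : ∫⁻ x, m x A ∂ν = ν A := by
  simpa only [lintegral_indicator_one hA, lintegral_const, measure_univ, mul_one] using
    hrev (fun _ y => A.indicator 1 y) ((measurable_one.indicator hA).comp measurable_snd)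

lemma ae_measure_apply_eq_zero (hprob : ∀ x, IsProbabilityMeasure (m x)) (hker : MeasurableKernel m)
    (hrev : Reversible m ν) {N : Set X} (hN : ν N = 0) : ∀ᵐ x ∂ν, m x N = 0 := by
  have hT := measurableSet_toMeasurable ν N
  have hint : ∫⁻ x, m x (toMeasurable ν N) ∂ν = 0 := by
    rw [hrev.lintegral_measure_apply hprob hT, measure_toMeasurable, hN]
  filter_upwards [(lintegral_eq_zero_iff (hker _ hT)).1 hint] with x hx
  exact measure_mono_null (subset_toMeasurable ν N) hx

lemma exists_null_superset_forall_notMem_measure_eq_zero (hprob : ∀ x, IsProbabilityMeasure (m x))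
    (hker : MeasurableKernel m) (hrev : Reversible m ν) {N : Set X} (hN : ν N = 0) :
    ∃ N' : Set X, MeasurableSet N' ∧ ν N' = 0 ∧ N ⊆ N' ∧ ∀ x ∉ N', m x N' = 0 := by
  -- `N'` collects the points from which the walk hits `N` with positive probability in
  -- finitely many steps.
  let step : Set X → Set X := fun s => s ∪ {x | m x s ≠ 0}
  have hstep : ∀ s, MeasurableSet s ∧ ν s = 0 → MeasurableSet (step s) ∧ ν (step s) = 0 :=
    fun s ⟨hs, hs0⟩ => ⟨hs.union ((hker s hs) (measurableSet_singleton 0)).compl,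
      measure_union_null hs0 (ae_iff.1 (hrev.ae_measure_apply_eq_zero hprob hker hs0))⟩
  let S : ℕ → Set X := fun k => step^[k] (toMeasurable ν N)
  have hS : ∀ k, MeasurableSet (S k) ∧ ν (S k) = 0 := by
    intro k
    induction k with
    | zero => exact ⟨measurableSet_toMeasurable ν N, (measure_toMeasurable N).trans hN⟩
    | succ k ih => simpa only [S, Function.iterate_succ_apply'] using hstep _ ih
  refine ⟨⋃ k, S k, .iUnion fun k => (hS k).1, measure_iUnion_null fun k => (hS k).2,
    (subset_toMeasurable ν N).trans (subset_iUnion S 0), fun x hx => ?_⟩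
  refine measure_iUnion_null fun k => not_not.1 fun hk => hx (mem_iUnion.2 ⟨k + 1, ?_⟩)
  simp only [S, Function.iterate_succ_apply']
  exact Or.inr hk

end Reversible

namespace ErgodicRW

lemma measure_eq_zero_or_one (hprob : ∀ x, IsProbabilityMeasure (m x)) (hker : MeasurableKernel m)
    (hrev : Reversible m ν) (herg : ErgodicRW m ν) {B : Set X} (hB : MeasurableSet B)
    (hinv : ∀ᵐ x ∂ν, x ∈ B → m x Bᶜ = 0) : ν B = 0 ∨ ν B = 1 := by
  obtain ⟨N, hN, hN0, hbad, hclosed⟩ :=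
    hrev.exists_null_superset_forall_notMem_measure_eq_zero hprob hker (ae_iff.1 hinv)
  have hB' : ∀ x ∈ B \ N, m x (B \ N) = 1 := by
    intro x ⟨hxB, hxN⟩
    have hx : m x Bᶜ = 0 := not_not.1 (fun h => hxN (hbad h)) hxB
    rw [← prob_compl_eq_zero_iff (hB.diff hN), compl_sdiff]
    exact measure_union_null (hclosed x hxN) hx
  simpa only [measure_sdiff_null hN0] using herg _ (hB.diff hN) hB'

lemma ae_ae_eq_iff_exists_ae_eq_const {β : Type*} [MeasurableSpace β]
    [MeasurableSpace.CountablySeparated β] [Nonempty β] [IsProbabilityMeasure ν]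
    (hprob : ∀ x, IsProbabilityMeasure (m x)) (hker : MeasurableKernel m) (hrev : Reversible m ν)
    (herg : ErgodicRW m ν) {u : X → β} (hu : Measurable u) :
    (∀ᵐ x ∂ν, ∀ᵐ y ∂(m x), u y = u x) ↔ ∃ c : β, u =ᵐ[ν] fun _ => c := by
  constructor
  · intro h
    refine exists_eventuallyEq_const_of_forall_separating MeasurableSet fun U hU => ?_
    have hinv : ∀ᵐ x ∂ν, x ∈ u ⁻¹' U → m x (u ⁻¹' U)ᶜ = 0 := by
      filter_upwards [h] with x hx hxU
      refine measure_mono_null (fun y hy => ?_) (ae_iff.1 hx)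
      exact fun hyx => hy (by rwa [mem_preimage, hyx])
    rcases herg.measure_eq_zero_or_one hprob hker hrev (hu hU) hinv with h0 | h1
    · exact Or.inr (measure_eq_zero_iff_ae_notMem.1 h0)
    · exact Or.inl (mem_ae_iff.2 ((prob_compl_eq_zero_iff (hu hU)).2 h1))
  · rintro ⟨c, hc⟩
    filter_upwards [hc, hrev.ae_measure_apply_eq_zero hprob hker (N := {x | u x ≠ c}) hc]
      with x hx hmx
    rw [hx]
    exact ae_iff.2 hmx

end ErgodicRW

end

theorem tv_eq_zero_iff_ae_const_general
    {X : Type*} [MeasurableSpace X]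
    (m : X → Measure X) (hprob : ∀ x, IsProbabilityMeasure (m x))
    (hker : MeasurableKernel m)
    (ν : Measure X) [IsProbabilityMeasure ν] (hrev : Reversible m ν)
    (herg : ErgodicRW m ν)
    (u : X → ℝ) (hu : MemBVm m ν u) :
    TVm m ν u = 0 ↔ ∃ c : ℝ, u =ᵐ[ν] fun _ => c := by
  rw [TVm, mul_eq_zero, or_iff_right (by simp), nlEnergy_eq_zero_iff hprob hker hu.1]
  exact herg.ae_ae_eq_iff_exists_ae_eq_const hprob hker hrev hu.1

/-- If `ν` is an ergodic invariant and reversible probability measure, then for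
`u ∈ BV_m(X,ν)`: `TV_m(u) = 0` iff `u` is `ν`-a.e. equal to a constant. -/
theorem tv_eq_zero_iff_ae_const
    {X : Type*} [MetricSpace X] [PolishSpace X] [MeasurableSpace X] [BorelSpace X]
    (m : X → Measure X) (hprob : ∀ x, IsProbabilityMeasure (m x))
    (hker : MeasurableKernel m)
    (ν : Measure X) [IsProbabilityMeasure ν] (hrev : Reversible m ν)
    (herg : ErgodicRW m ν)
    (u : X → ℝ) (hu : MemBVm m ν u) :
    TVm m ν u = 0 ↔ ∃ c : ℝ, u =ᵐ[ν] fun _ => c :=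
  tv_eq_zero_iff_ae_const_general m hprob hker ν hrev herg u hu
end

section
/- Let [X,d,m] be a metric random walk space with an invariant and reversible σ-finite measure ν. If (u_n) ⊂ BV_m(X,ν) ∩ L²(X,ν) converges weakly in L²(X,ν) to u ∈ BV_m(X,ν) ∩ L²(X,ν), then TV_m(u) ≤ liminf_{n→∞} TV_m(u_n). -/
open MeasureTheory ENNReal Filter Set Topology

/-! With `μ = ν ⊗ m`, which reversibility makes invariant under `(x, y) ↦ (y, x)`, the nonlocal
energy of `v` is `∫ |v y - v x| dμ`. For a bounded field `z` supported in `A × A` with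
`ν A < ∞`, the symmetry of `μ` gives the integration by parts
`∫ z(x,y) (v y - v x) dμ = -2 ∫ v · div_m z dν` with `div_m z ∈ L²`, so `v ↦ ∫ z (v y - v x) dμ`
is continuous for weak convergence in `L²`, and it is bounded by the energy of `v` when `|z| ≤ 1`.
Choosing `z = sign (u y - u x)` on `A_k × A_k` for an exhausting sequence of sets of finite
measure, monotone convergence writes the energy of `u` as a supremum of such functionals. -/

open ProbabilityTheory

theorem MeasureTheory.MemLp.integrableOn_of_measure_ne_top {α E : Type*} [MeasurableSpace α]
    [NormedAddCommGroup E] {μ : Measure α} {p : ℝ≥0∞} {f : α → E} {s : Set α}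
    (hf : MemLp f p μ) (hp : 1 ≤ p) (hs : μ s ≠ ∞) : IntegrableOn f s μ :=
  have : Fact (μ s < ∞) := ⟨hs.lt_top⟩
  (hf.restrict s).integrable hp

theorem Real.measurable_sign : Measurable Real.sign :=
  Measurable.ite measurableSet_Iio measurable_const
    (Measurable.ite measurableSet_Ioi measurable_const measurable_const)

theorem Real.sign_mul_self (r : ℝ) : Real.sign r * r = |r| := by
  rcases lt_trichotomy r 0 with h | rfl | h
  · rw [Real.sign_of_neg h, abs_of_neg h, neg_one_mul]
  · simp
  · rw [Real.sign_of_pos h, abs_of_pos h, one_mul]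

theorem Real.abs_sign_le_one (r : ℝ) : |Real.sign r| ≤ 1 := by
  rcases Real.sign_apply_eq r with h | h | h <;> simp [h]

noncomputable def signField {X : Type*} (u : X → ℝ) (A : Set X) (x y : X) : ℝ :=
  (A ×ˢ A).indicator (fun p => Real.sign (u p.2 - u p.1)) (x, y)

theorem signField_mul_sub {X : Type*} (u : X → ℝ) (A : Set X) (p : X × X) :
    signField u A p.1 p.2 * (u p.2 - u p.1) = (A ×ˢ A).indicator (fun p => |u p.2 - u p.1|) p := by
  by_cases h : p ∈ A ×ˢ A
  · simp [signField, indicator_of_mem h, Real.sign_mul_self]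
  · simp [signField, indicator_of_notMem h]

section RandomWalk

variable {X : Type*} [MeasurableSpace X] {ν : Measure X} {κ : Kernel X X}

theorem Reversible.measurePreserving_swap [SFinite ν] [IsSFiniteKernel κ] (h : Reversible κ ν) :
    MeasurePreserving Prod.swap (ν ⊗ₘ κ) (ν ⊗ₘ κ) := by
  refine ⟨measurable_swap, Measure.ext_of_lintegral _ fun f hf => ?_⟩
  rw [lintegral_map hf measurable_swap, Measure.lintegral_compProd hf,
    Measure.lintegral_compProd (f := fun p => f p.swap) (hf.comp measurable_swap)]
  exact h (fun x y => f (y, x)) (hf.comp measurable_swap)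

theorem nlEnergy_eq_lintegral_compProd [SFinite ν] [IsSFiniteKernel κ] {v : X → ℝ}
    (hv : Measurable v) :
    nlEnergy κ ν v = ∫⁻ p, ENNReal.ofReal |v p.2 - v p.1| ∂(ν ⊗ₘ κ) := by
  rw [Measure.lintegral_compProd (by fun_prop)]
  rfl

theorem ofReal_integral_mul_sub_le_nlEnergy [SFinite ν] [IsSFiniteKernel κ] {z : X → X → ℝ}
    (hz : ∀ x y, |z x y| ≤ 1) {v : X → ℝ} (hv : Measurable v) :
    ENNReal.ofReal (∫ p, z p.1 p.2 * (v p.2 - v p.1) ∂(ν ⊗ₘ κ)) ≤ nlEnergy κ ν v := by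
  rw [nlEnergy_eq_lintegral_compProd hv]
  calc ENNReal.ofReal (∫ p, z p.1 p.2 * (v p.2 - v p.1) ∂(ν ⊗ₘ κ))
      ≤ ‖∫ p, z p.1 p.2 * (v p.2 - v p.1) ∂(ν ⊗ₘ κ)‖ₑ := by
        rw [Real.enorm_eq_ofReal_abs]
        exact ENNReal.ofReal_le_ofReal (le_abs_self _)
    _ ≤ ∫⁻ p, ‖z p.1 p.2 * (v p.2 - v p.1)‖ₑ ∂(ν ⊗ₘ κ) := enorm_integral_le_lintegral_enorm _
    _ ≤ ∫⁻ p, ENNReal.ofReal |v p.2 - v p.1| ∂(ν ⊗ₘ κ) := lintegral_mono fun p => by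
        rw [Real.enorm_eq_ofReal_abs, abs_mul]
        exact ENNReal.ofReal_le_ofReal (mul_le_of_le_one_left (abs_nonneg _) (hz _ _))

theorem integrable_comp_fst_compProd [SFinite ν] [IsMarkovKernel κ] {w : X → ℝ}
    (hw : Integrable w ν) : Integrable (fun p : X × X => w p.1) (ν ⊗ₘ κ) :=
  Integrable.comp_measurable (by rwa [← Measure.fst, Measure.fst_compProd]) measurable_fst

structure IsBoundedFieldOn (z : X → X → ℝ) (A : Set X) (C : ℝ) : Prop where
  measurable : Measurable (Function.uncurry z)
  abs_le : ∀ x y, |z x y| ≤ C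
  mem_of_ne_zero : ∀ x y, z x y ≠ 0 → x ∈ A ∧ y ∈ A

namespace IsBoundedFieldOn

variable {z : X → X → ℝ} {A : Set X} {C : ℝ}

theorem swap (hz : IsBoundedFieldOn z A C) : IsBoundedFieldOn (fun x y => z y x) A C where
  measurable := hz.measurable.comp measurable_swap
  abs_le x y := hz.abs_le y x
  mem_of_ne_zero x y h := (hz.mem_of_ne_zero y x h).symm

theorem eq_zero_of_fst_notMem (hz : IsBoundedFieldOn z A C) {x : X} (hx : x ∉ A) (y : X) :
    z x y = 0 :=
  by_contra fun h => hx (hz.mem_of_ne_zero x y h).1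

theorem integrable_mul_fst [SFinite ν] [IsMarkovKernel κ] (hz : IsBoundedFieldOn z A C)
    (hA : MeasurableSet A) {v : X → ℝ} (hv : IntegrableOn v A ν) :
    Integrable (fun p : X × X => z p.1 p.2 * v p.1) (ν ⊗ₘ κ) := by
  have hw := integrable_comp_fst_compProd (κ := κ) ((integrable_indicator_iff hA).2 hv)
  refine (hw.bdd_mul (c := C) hz.measurable.aestronglyMeasurable
    (ae_of_all _ fun p => hz.abs_le p.1 p.2)).congr (ae_of_all _ fun p => ?_)
  by_cases hp : p.1 ∈ A
  · simp only [Function.uncurry, indicator_of_mem hp]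
  · simp only [Function.uncurry, hz.eq_zero_of_fst_notMem hp, zero_mul]

theorem integrable_mul_snd [SFinite ν] [IsMarkovKernel κ]
    (hsymm : MeasurePreserving Prod.swap (ν ⊗ₘ κ) (ν ⊗ₘ κ)) (hz : IsBoundedFieldOn z A C)
    (hA : MeasurableSet A) {v : X → ℝ} (hv : IntegrableOn v A ν) :
    Integrable (fun p : X × X => z p.1 p.2 * v p.2) (ν ⊗ₘ κ) :=
  have h := hz.swap.integrable_mul_fst hA hv
  (hsymm.integrable_comp h.aestronglyMeasurable).2 h

theorem integrable_mul_sub [SFinite ν] [IsMarkovKernel κ]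
    (hsymm : MeasurePreserving Prod.swap (ν ⊗ₘ κ) (ν ⊗ₘ κ)) (hz : IsBoundedFieldOn z A C)
    (hA : MeasurableSet A) {v : X → ℝ} (hv : IntegrableOn v A ν) :
    Integrable (fun p : X × X => z p.1 p.2 * (v p.2 - v p.1)) (ν ⊗ₘ κ) := by
  simp only [mul_sub]
  exact (hz.integrable_mul_snd hsymm hA hv).sub (hz.integrable_mul_fst hA hv)

theorem abs_divm_le [IsMarkovKernel κ] (hz : IsBoundedFieldOn z A C) (x : X) :
    |divm κ z x| ≤ C := by
  have h := norm_integral_le_of_norm_le_const (μ := κ x) (f := fun y => z x y - z y x)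
    (C := 2 * C) (ae_of_all _ fun y =>
      (abs_sub _ _).trans (by linarith [hz.abs_le x y, hz.abs_le y x]))
  rw [divm, abs_mul, abs_of_pos (by norm_num : (0 : ℝ) < 2⁻¹)]
  simp only [probReal_univ, mul_one, Real.norm_eq_abs] at h
  linarith

theorem divm_eq_zero_of_notMem (hz : IsBoundedFieldOn z A C) {x : X} (hx : x ∉ A) :
    divm κ z x = 0 := by
  simp [divm, hz.eq_zero_of_fst_notMem hx, hz.swap.eq_zero_of_fst_notMem hx]

theorem memLp_divm [IsMarkovKernel κ] (hz : IsBoundedFieldOn z A C) (hA : MeasurableSet A)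
    (hνA : ν A ≠ ∞) (p : ℝ≥0∞) : MemLp (divm κ z) p ν := by
  have hmeas : StronglyMeasurable (divm κ z) :=
    (StronglyMeasurable.integral_kernel_prod_right (f := fun x y => z x y - z y x)
      (hz.measurable.sub hz.swap.measurable).stronglyMeasurable).const_mul _
  refine (memLp_indicator_const p hA C (Or.inr hνA)).of_le hmeas.aestronglyMeasurable
    (ae_of_all _ fun x => ?_)
  by_cases hx : x ∈ A
  · simpa [indicator_of_mem hx] using (hz.abs_divm_le x).trans (le_abs_self C)
  · simp [indicator_of_notMem hx, hz.divm_eq_zero_of_notMem hx]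

theorem integral_mul_sub_eq [SFinite ν] [IsMarkovKernel κ]
    (hsymm : MeasurePreserving Prod.swap (ν ⊗ₘ κ) (ν ⊗ₘ κ)) (hz : IsBoundedFieldOn z A C)
    (hA : MeasurableSet A) {v : X → ℝ} (hv : IntegrableOn v A ν) :
    ∫ p, z p.1 p.2 * (v p.2 - v p.1) ∂(ν ⊗ₘ κ) = -2 * ∫ x, v x * divm κ z x ∂ν := by
  have h₁ := hz.integrable_mul_fst (κ := κ) hA hv
  have h₂ := hz.swap.integrable_mul_fst (κ := κ) hA hv
  have hinner : ∀ x, ∫ y, (z y x - z x y) ∂κ x = -(2 * divm κ z x) := fun x => by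
    rw [divm, mul_inv_cancel_left₀ two_ne_zero, ← integral_neg]
    simp only [neg_sub]
  calc ∫ p, z p.1 p.2 * (v p.2 - v p.1) ∂(ν ⊗ₘ κ)
      = ∫ p, z p.1 p.2 * v p.2 ∂(ν ⊗ₘ κ) - ∫ p, z p.1 p.2 * v p.1 ∂(ν ⊗ₘ κ) := by
        simp only [mul_sub]
        exact integral_sub (hz.integrable_mul_snd hsymm hA hv) h₁
    _ = ∫ p, z p.2 p.1 * v p.1 ∂(ν ⊗ₘ κ) - ∫ p, z p.1 p.2 * v p.1 ∂(ν ⊗ₘ κ) := by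
        congr 1
        exact hsymm.integral_comp MeasurableEquiv.prodComm.measurableEmbedding
          (fun p => z p.2 p.1 * v p.1)
    _ = ∫ x, (∫ y, (z y x - z x y) ∂κ x) * v x ∂ν := by
        rw [← integral_sub h₂ h₁, Measure.integral_compProd
          (f := fun p => z p.2 p.1 * v p.1 - z p.1 p.2 * v p.1) (h₂.sub h₁)]
        simp only [← sub_mul, integral_mul_const]
    _ = -2 * ∫ x, v x * divm κ z x ∂ν := by
        rw [← integral_const_mul]
        simp only [hinner]
        congr 1 with x
        ring

end IsBoundedFieldOn

theorem isBoundedFieldOn_signField {u : X → ℝ} (hu : Measurable u) (A : Set X)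
    (hA : MeasurableSet A) : IsBoundedFieldOn (signField u A) A 1 where
  measurable := (Real.measurable_sign.comp (by fun_prop)).indicator (hA.prod hA)
  abs_le x y := by
    unfold signField
    by_cases h : (x, y) ∈ A ×ˢ A
    · simpa [indicator_of_mem h] using Real.abs_sign_le_one _
    · simp [indicator_of_notMem h]
  mem_of_ne_zero x y h := by
    by_contra hxy
    exact h (indicator_of_notMem (s := A ×ˢ A) hxy _)

theorem nlEnergy_le_iSup_signField [SFinite ν] [IsMarkovKernel κ]
    (hsymm : MeasurePreserving Prod.swap (ν ⊗ₘ κ) (ν ⊗ₘ κ)) {u : X → ℝ} (hu : Measurable u)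
    {A : ℕ → Set X} (hAm : ∀ k, MeasurableSet (A k)) (hmono : Monotone A)
    (hcover : ⋃ k, A k = univ) (huA : ∀ k, IntegrableOn u (A k) ν) :
    nlEnergy κ ν u ≤
      ⨆ k, ENNReal.ofReal (∫ p, signField u (A k) p.1 p.2 * (u p.2 - u p.1) ∂(ν ⊗ₘ κ)) := by
  have hcover₂ : ⋃ k, A k ×ˢ A k = univ := by
    rw [iUnion_prod_of_monotone hmono hmono, hcover, univ_prod_univ]
  rw [nlEnergy_eq_lintegral_compProd hu, ← setLIntegral_univ, ← hcover₂,
    setLIntegral_iUnion_of_directed _ (hmono.set_prod hmono).directed_le]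
  refine iSup_mono fun k => le_of_eq ?_
  have hint :=
    (isBoundedFieldOn_signField hu (A k) (hAm k)).integrable_mul_sub hsymm (hAm k) (huA k)
  simp only [signField_mul_sub] at hint ⊢
  rw [integral_indicator ((hAm k).prod (hAm k)), ofReal_integral_eq_lintegral_ofReal
    ((integrable_indicator_iff ((hAm k).prod (hAm k))).1 hint) (ae_of_all _ fun _ => abs_nonneg _)]

theorem nlEnergy_le_liminf_of_weakL2 [SigmaFinite ν] [IsMarkovKernel κ]
    (hsymm : MeasurePreserving Prod.swap (ν ⊗ₘ κ) (ν ⊗ₘ κ)) {u : X → ℝ} {un : ℕ → X → ℝ}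
    (hu : Measurable u) (hu2 : MemLp u 2 ν) (hun : ∀ n, Measurable (un n))
    (hun2 : ∀ n, MemLp (un n) 2 ν)
    (hweak : ∀ φ : X → ℝ, MemLp φ 2 ν →
      Tendsto (fun n => ∫ x, un n x * φ x ∂ν) atTop (𝓝 (∫ x, u x * φ x ∂ν))) :
    nlEnergy κ ν u ≤ liminf (fun n => nlEnergy κ ν (un n)) atTop := by
  have hloc : ∀ {v : X → ℝ}, MemLp v 2 ν → ∀ k, IntegrableOn v (spanningSets ν k) ν :=
    fun hv k => hv.integrableOn_of_measure_ne_top one_le_two (measure_spanningSets_lt_top ν k).ne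
  refine (nlEnergy_le_iSup_signField hsymm hu (measurableSet_spanningSets ν)
    (monotone_spanningSets ν) (iUnion_spanningSets ν) (hloc hu2)).trans (iSup_le fun k => ?_)
  have hAk := measurableSet_spanningSets ν k
  have hz := isBoundedFieldOn_signField hu _ hAk
  have hIBP := fun {v} (hv : MemLp v 2 ν) => hz.integral_mul_sub_eq hsymm hAk (hloc hv k)
  have hconv : Tendsto
      (fun n => ∫ p, signField u (spanningSets ν k) p.1 p.2 * (un n p.2 - un n p.1) ∂(ν ⊗ₘ κ))
      atTop (𝓝 (∫ p, signField u (spanningSets ν k) p.1 p.2 * (u p.2 - u p.1) ∂(ν ⊗ₘ κ))) := by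
    rw [hIBP hu2]
    exact ((hweak _ (hz.memLp_divm hAk (measure_spanningSets_lt_top ν k).ne 2)).const_mul
      (-2)).congr fun n => (hIBP (hun2 n)).symm
  rw [← ((ENNReal.continuous_ofReal.tendsto _).comp hconv).liminf_eq]
  exact liminf_le_liminf (Eventually.of_forall fun n =>
    ofReal_integral_mul_sub_le_nlEnergy hz.abs_le (hun n))

end RandomWalk

theorem tv_lsc_weakL2_general
    {X : Type*} [MeasurableSpace X]
    (m : X → Measure X) (hprob : ∀ x, IsProbabilityMeasure (m x))
    (hker : MeasurableKernel m)
    (ν : Measure X) [SigmaFinite ν] (hrev : Reversible m ν)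
    (u : X → ℝ) (un : ℕ → X → ℝ)
    (hu : MemBVm m ν u) (hu2 : MemLp u 2 ν)
    (hun : ∀ n, MemBVm m ν (un n)) (hun2 : ∀ n, MemLp (un n) 2 ν)
    (hweak : ∀ φ : X → ℝ, MemLp φ 2 ν →
      Tendsto (fun n => ∫ x, un n x * φ x ∂ν) atTop (𝓝 (∫ x, u x * φ x ∂ν))) :
    TVm m ν u ≤ Filter.liminf (fun n => TVm m ν (un n)) atTop := by
  let κ : Kernel X X := ⟨m, Measure.measurable_of_measurable_coe m hker⟩
  have : IsMarkovKernel κ := ⟨hprob⟩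
  have hle : nlEnergy κ ν u ≤ liminf (fun n => nlEnergy κ ν (un n)) atTop :=
    nlEnergy_le_liminf_of_weakL2 (Reversible.measurePreserving_swap (κ := κ) hrev) hu.1 hu2
      (fun n => (hun n).1) hun2 hweak
  calc TVm m ν u ≤ 2⁻¹ * liminf (fun n => nlEnergy m ν (un n)) atTop :=
      mul_le_mul_right hle _
    _ = liminf (fun n => TVm m ν (un n)) atTop :=
      (ENNReal.liminf_const_mul_of_ne_top (by simp)).symm

/-- `TV_m` is lower semicontinuous with respect to weak convergence in `L²(X,ν)`. -/
theorem tv_lsc_weakL2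
    {X : Type*} [MetricSpace X] [PolishSpace X] [MeasurableSpace X] [BorelSpace X]
    (m : X → Measure X) (hprob : ∀ x, IsProbabilityMeasure (m x))
    (hker : MeasurableKernel m)
    (ν : Measure X) [SigmaFinite ν] (hrev : Reversible m ν)
    (u : X → ℝ) (un : ℕ → X → ℝ)
    (hu : MemBVm m ν u) (hu2 : MemLp u 2 ν)
    (hun : ∀ n, MemBVm m ν (un n)) (hun2 : ∀ n, MemLp (un n) 2 ν)
    (hweak : ∀ φ : X → ℝ, MemLp φ 2 ν →
      Tendsto (fun n => ∫ x, un n x * φ x ∂ν) atTop (𝓝 (∫ x, u x * φ x ∂ν))) :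
    TVm m ν u ≤ Filter.liminf (fun n => TVm m ν (un n)) atTop :=
  tv_lsc_weakL2_general m hprob hker ν hrev u un hu hu2 hun hun2 hweak
end

section
/- Let [X,d,m] be a metric random walk space with an invariant and reversible σ-finite measure ν, and let Ψ : (0,∞) → [0,∞) be non-increasing. Then ν(A)·Ψ(ν(A)) ≤ P_m(A) for every ν-measurable A ⊂ X with 0 < ν(A) < ν(X) if and only if Ψ(ν(A))·‖u‖_{L¹(X,ν)} ≤ TV_m(u) for every ν-measurable A ⊂ X with 0 < ν(A) < ν(X) and every u ∈ L¹(X,ν) with u = 0 ν-a.e. on X∖A. -/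
open MeasureTheory ENNReal Filter Set Topology

/-!
For `v ≥ 0` the coarea formula `TV_m(v) = ∫₀^∞ P_m({v > t}) dt` holds: pointwise,
`|v(y) - v(x)| = ∫₀^∞ |χ_{v>t}(y) - χ_{v>t}(x)| dt`, then Tonelli on `(ν ⊗ m_x) × dt`, and
reversibility turns `TV_m` of an indicator into a perimeter. Together with the layer-cake
formula `‖u‖₁ = ∫₀^∞ ν({|u| > t}) dt` and `TV_m(|u|) ≤ TV_m(u)`, the Poincaré inequality
follows from the isoperimetric one applied to the superlevel sets `{|u| > t}`: these have
measure at most `ν(A)` when `u` vanishes off `A`, so monotonicity of `Ψ` applies. Conversely,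
test the Poincaré inequality on `u = χ_A`, for which `TV_m(χ_A) = P_m(A)`.
-/

theorem lintegral_Ioi_ofReal_abs_indicator_Iio_sub {a b : ℝ} (ha : 0 ≤ a) (hb : 0 ≤ b) :
    ∫⁻ t in Ioi 0, ENNReal.ofReal |(Iio b).indicator 1 t - (Iio a).indicator 1 t|
      = ENNReal.ofReal |b - a| := by
  wlog hab : a ≤ b generalizing a b
  · simpa only [abs_sub_comm] using this hb ha (le_of_not_ge hab)
  have hind : (fun t => ENNReal.ofReal |(Iio b).indicator 1 t - (Iio a).indicator (1 : ℝ → ℝ) t|)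
      = (Ico a b).indicator 1 := by
    ext t
    by_cases hta : t < a
    · simp [hta, hta.trans_le hab]
    · by_cases htb : t < b <;> simp [indicator_apply, hta, htb]
  rw [hind, restrict_Ioi_eq_restrict_Ici, lintegral_indicator_one measurableSet_Ico,
    Measure.restrict_apply measurableSet_Ico,
    inter_eq_left.2 (show Ico a b ⊆ Ici 0 from fun t ht => ha.trans ht.1), Real.volume_Ico,
    abs_of_nonneg (sub_nonneg.2 hab)]

section

open ProbabilityTheory

variable {X : Type*} [MeasurableSpace X] {m : X → Measure X} {ν : Measure X}

theorem Lm_comm (hrev : Reversible m ν) {A B : Set X} (hA : MeasurableSet A)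
    (hB : MeasurableSet B) : Lm m ν A B = Lm m ν B A := by
  have h := hrev (fun x y => A.indicator 1 x * B.indicator 1 y)
    (((measurable_one.indicator hA).comp measurable_fst).mul
      ((measurable_one.indicator hB).comp measurable_snd))
  simp only [lintegral_const_mul _ (measurable_one.indicator hB),
    lintegral_mul_const _ (measurable_one.indicator hA), lintegral_indicator_one hA,
    lintegral_indicator_one hB] at h
  rw [Lm, Lm, ← lintegral_indicator hA, ← lintegral_indicator hB]
  convert h using 2
  all_goals ext x; by_cases hx : x ∈ A <;> by_cases hx' : x ∈ B <;> simp [hx, hx', mul_comm]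

theorem nlEnergy_indicator_one (hker : MeasurableKernel m) (hrev : Reversible m ν)
    {E : Set X} (hE : MeasurableSet E) :
    nlEnergy m ν (E.indicator 1) = 2 * Pm m ν E := by
  have hinner : ∀ x, ∫⁻ y, ENNReal.ofReal |E.indicator 1 y - E.indicator (1 : X → ℝ) x| ∂(m x)
      = E.indicator (fun z => m z Eᶜ) x + Eᶜ.indicator (fun z => m z E) x := by
    intro x
    by_cases hx : x ∈ E
    · simp only [indicator_of_mem hx, indicator_of_notMem (notMem_compl_iff.2 hx), add_zero]
      rw [← lintegral_indicator_one hE.compl]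
      congr 1 with y
      by_cases hy : y ∈ E <;> simp [hy]
    · simp only [indicator_of_notMem hx, indicator_of_mem (mem_compl hx), zero_add]
      rw [← lintegral_indicator_one hE]
      congr 1 with y
      by_cases hy : y ∈ E <;> simp [hy]
  rw [nlEnergy, lintegral_congr hinner, lintegral_add_left ((hker Eᶜ hE.compl).indicator hE),
    lintegral_indicator hE, lintegral_indicator hE.compl, ← Lm, ← Lm,
    Lm_comm hrev hE.compl hE, Pm, two_mul]

theorem TVm_indicator_one (hker : MeasurableKernel m) (hrev : Reversible m ν)
    {E : Set X} (hE : MeasurableSet E) : TVm m ν (E.indicator 1) = Pm m ν E := by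
  rw [TVm, nlEnergy_indicator_one hker hrev hE, ← mul_assoc,
    ENNReal.inv_mul_cancel two_ne_zero ofNat_ne_top, one_mul]

def MeasurableKernel.toKernel_s8 (hker : MeasurableKernel m) : Kernel X X :=
  ⟨m, Measure.measurable_of_measurable_coe _ hker⟩

theorem lintegral_lintegral_eq_lintegral_compProd [SFinite ν]
    (hprob : ∀ x, IsProbabilityMeasure (m x)) (hker : MeasurableKernel m)
    {f : X × X → ℝ≥0∞} (hf : Measurable f) :
    ∫⁻ x, ∫⁻ y, f (x, y) ∂(m x) ∂ν = ∫⁻ p, f p ∂(ν ⊗ₘ hker.toKernel_s8) := by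
  have : IsMarkovKernel hker.toKernel_s8 := ⟨hprob⟩
  exact (Measure.lintegral_compProd (κ := hker.toKernel_s8) hf).symm

theorem nlEnergy_eq_lintegral_nlEnergy_indicator [SFinite ν]
    (hprob : ∀ x, IsProbabilityMeasure (m x)) (hker : MeasurableKernel m)
    {v : X → ℝ} (hv : Measurable v) (hv0 : 0 ≤ v) :
    nlEnergy m ν v = ∫⁻ t in Ioi 0, nlEnergy m ν ({x | t < v x}.indicator 1) := by
  have : IsMarkovKernel hker.toKernel_s8 := ⟨hprob⟩
  set G : (X × X) × ℝ → ℝ≥0∞ := fun z =>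
    ENNReal.ofReal |(Iio (v z.1.2)).indicator 1 z.2 - (Iio (v z.1.1)).indicator 1 z.2|
  have hG : Measurable G := by
    have hχ : ∀ i : X × X → X, Measurable i →
        Measurable fun z : (X × X) × ℝ => (Iio (v (i z.1))).indicator (1 : ℝ → ℝ) z.2 :=
      fun i hi => Measurable.ite (measurableSet_lt measurable_snd (by fun_prop))
        measurable_const measurable_const
    exact ((hχ _ measurable_snd).sub (hχ _ measurable_fst)).abs.ennreal_ofReal
  calc nlEnergy m ν v
      = ∫⁻ p, ENNReal.ofReal |v p.2 - v p.1| ∂(ν ⊗ₘ hker.toKernel_s8) :=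
        lintegral_lintegral_eq_lintegral_compProd (f := fun p => ENNReal.ofReal |v p.2 - v p.1|)
          hprob hker (by fun_prop)
    _ = ∫⁻ p, (∫⁻ t in Ioi 0, G (p, t)) ∂(ν ⊗ₘ hker.toKernel_s8) :=
        lintegral_congr fun p => (lintegral_Ioi_ofReal_abs_indicator_Iio_sub (hv0 _) (hv0 _)).symm
    _ = ∫⁻ t in Ioi 0, ∫⁻ p, G (p, t) ∂(ν ⊗ₘ hker.toKernel_s8) :=
        lintegral_lintegral_swap hG.aemeasurable
    _ = ∫⁻ t in Ioi 0, nlEnergy m ν ({x | t < v x}.indicator 1) :=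
        lintegral_congr fun t => (lintegral_lintegral_eq_lintegral_compProd
          (f := fun p => G (p, t)) hprob hker (hG.comp (by fun_prop))).symm

theorem TVm_eq_lintegral_Pm [SFinite ν] (hprob : ∀ x, IsProbabilityMeasure (m x))
    (hker : MeasurableKernel m) (hrev : Reversible m ν) {v : X → ℝ} (hv : Measurable v)
    (hv0 : 0 ≤ v) : TVm m ν v = ∫⁻ t in Ioi 0, Pm m ν {x | t < v x} := by
  rw [TVm, nlEnergy_eq_lintegral_nlEnergy_indicator hprob hker hv hv0,
    ← lintegral_const_mul' _ _ (by simp)]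
  exact lintegral_congr fun t => TVm_indicator_one hker hrev (measurableSet_lt measurable_const hv)

theorem TVm_abs_le (u : X → ℝ) : TVm m ν (fun x => |u x|) ≤ TVm m ν u := by
  refine mul_le_mul_right (lintegral_mono fun x => lintegral_mono fun y => ?_) _
  exact ENNReal.ofReal_le_ofReal (abs_abs_sub_abs_le_abs_sub _ _)

theorem eLpNorm_one_eq_lintegral_measure_lt_abs {u : X → ℝ} (hu : AEMeasurable u ν) :
    eLpNorm u 1 ν = ∫⁻ t in Ioi 0, ν {x | t < |u x|} := by
  simp_rw [eLpNorm_one_eq_lintegral_enorm, ← ofReal_norm, Real.norm_eq_abs]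
  exact lintegral_eq_lintegral_meas_lt ν (ae_of_all _ fun x => abs_nonneg _) hu.abs

theorem measure_lt_abs_le_of_ae_eq_zero {u : X → ℝ} {A : Set X}
    (hu0 : ∀ᵐ x ∂ν, x ∉ A → u x = 0) {t : ℝ} (ht : 0 < t) : ν {x | t < |u x|} ≤ ν A := by
  refine measure_mono_ae ?_
  filter_upwards [hu0] with x hx (hxt : t < |u x|)
  by_contra hxA
  rw [hx hxA, abs_zero] at hxt
  exact ht.not_gt hxt

theorem mul_measure_le_Pm_of_measure_le {Ψ : ℝ → ℝ} (hΨmono : AntitoneOn Ψ (Ioi 0))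
    (hiso : ∀ A : Set X, MeasurableSet A → 0 < ν A → ν A < ν univ →
      ν A * ENNReal.ofReal (Ψ (ν A).toReal) ≤ Pm m ν A)
    {A E : Set X} (hE : MeasurableSet E) (hA : ν A < ν univ) (hEA : ν E ≤ ν A) :
    ENNReal.ofReal (Ψ (ν A).toReal) * ν E ≤ Pm m ν E := by
  rcases eq_or_ne (ν E) 0 with hE0 | hE0
  · simp [hE0]
  have hAtop : ν A ≠ ⊤ := (hA.trans_le le_top).ne
  have hΨ : Ψ (ν A).toReal ≤ Ψ (ν E).toReal :=
    hΨmono (ENNReal.toReal_pos hE0 (ne_top_of_le_ne_top hAtop hEA))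
      (ENNReal.toReal_pos (pos_iff_ne_zero.1 ((pos_iff_ne_zero.2 hE0).trans_le hEA)) hAtop)
      (ENNReal.toReal_mono hAtop hEA)
  calc ENNReal.ofReal (Ψ (ν A).toReal) * ν E
      ≤ ν E * ENNReal.ofReal (Ψ (ν E).toReal) := by
        rw [mul_comm]; gcongr
    _ ≤ Pm m ν E := hiso E hE (pos_iff_ne_zero.2 hE0) (hEA.trans_lt hA)

end

theorem psi_isoperimetric_iff_poincare_general
    {X : Type*} [MeasurableSpace X]
    (m : X → Measure X) (hprob : ∀ x, IsProbabilityMeasure (m x))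
    (hker : MeasurableKernel m)
    (ν : Measure X) [SigmaFinite ν] (hrev : Reversible m ν)
    (Ψ : ℝ → ℝ) (hΨmono : AntitoneOn Ψ (Set.Ioi 0)) :
    (∀ A : Set X, MeasurableSet A → 0 < ν A → ν A < ν Set.univ →
        ν A * ENNReal.ofReal (Ψ (ν A).toReal) ≤ Pm m ν A) ↔
      (∀ A : Set X, MeasurableSet A → 0 < ν A → ν A < ν Set.univ →
        ∀ u : X → ℝ, Measurable u → Integrable u ν → (∀ᵐ x ∂ν, x ∉ A → u x = 0) →
          ENNReal.ofReal (Ψ (ν A).toReal) * eLpNorm u 1 ν ≤ TVm m ν u) := by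
  constructor
  · intro hiso A _ _ hAuniv u hu _ hu0
    calc ENNReal.ofReal (Ψ (ν A).toReal) * eLpNorm u 1 ν
        = ∫⁻ t in Ioi 0, ENNReal.ofReal (Ψ (ν A).toReal) * ν {x | t < |u x|} := by
          rw [eLpNorm_one_eq_lintegral_measure_lt_abs hu.aemeasurable,
            lintegral_const_mul' _ _ ofReal_ne_top]
      _ ≤ ∫⁻ t in Ioi 0, Pm m ν {x | t < |u x|} :=
          setLIntegral_mono' measurableSet_Ioi fun t ht =>
            mul_measure_le_Pm_of_measure_le hΨmono hiso
              (measurableSet_lt measurable_const hu.abs) hAuniv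
              (measure_lt_abs_le_of_ae_eq_zero hu0 ht)
      _ = TVm m ν (fun x => |u x|) := (TVm_eq_lintegral_Pm hprob hker hrev hu.abs
          fun x => abs_nonneg (u x)).symm
      _ ≤ TVm m ν u := TVm_abs_le u
  · intro hpoin A hA hA0 hAuniv
    have hPoinA := hpoin A hA hA0 hAuniv (A.indicator 1) (measurable_one.indicator hA)
      ((integrable_indicator_iff hA).2 (integrableOn_const (hAuniv.trans_le le_top).ne))
      (ae_of_all _ fun x hx => indicator_of_notMem hx _)
    rw [TVm_indicator_one hker hrev hA, Pi.one_def,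
      eLpNorm_indicator_const hA one_ne_zero one_ne_top] at hPoinA
    simpa [mul_comm] using hPoinA

/-- For a non-increasing `Ψ : (0,∞) → [0,∞)`, `[X,d,m,ν]` satisfies the `Ψ`-isoperimetric
inequality `ν(A)·Ψ(ν(A)) ≤ P_m(A)` for all `A` with `0 < ν(A) < ν(X)` if and only if
`Ψ(ν(A))·‖u‖_{L¹(X,ν)} ≤ TV_m(u)` for all such `A` and all `u ∈ L¹(X,ν)` vanishing
`ν`-a.e. outside `A`. -/
theorem psi_isoperimetric_iff_poincare
    {X : Type*} [MetricSpace X] [PolishSpace X] [MeasurableSpace X] [BorelSpace X]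
    (m : X → Measure X) (hprob : ∀ x, IsProbabilityMeasure (m x))
    (hker : MeasurableKernel m)
    (ν : Measure X) [SigmaFinite ν] (hrev : Reversible m ν)
    (Ψ : ℝ → ℝ) (hΨ0 : ∀ r, 0 < r → 0 ≤ Ψ r) (hΨmono : AntitoneOn Ψ (Set.Ioi 0)) :
    (∀ A : Set X, MeasurableSet A → 0 < ν A → ν A < ν Set.univ →
        ν A * ENNReal.ofReal (Ψ (ν A).toReal) ≤ Pm m ν A) ↔
      (∀ A : Set X, MeasurableSet A → 0 < ν A → ν A < ν Set.univ →
        ∀ u : X → ℝ, Measurable u → Integrable u ν → (∀ᵐ x ∂ν, x ∉ A → u x = 0) →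
          ENNReal.ofReal (Ψ (ν A).toReal) * eLpNorm u 1 ν ≤ TVm m ν u) :=
  psi_isoperimetric_iff_poincare_general m hprob hker ν hrev Ψ hΨmono
end

section
/- Let [X,d,m] be a metric random walk space with an invariant and reversible σ-finite measure ν, and let n > 2. Suppose that for some I_n > 0 the Sobolev inequality ‖u‖_{L^{n/(n−1)}(X,ν)} ≤ I_n · TV_m(u) holds for all u ∈ BV_m^0(X,ν). Then, with C_n := (8(n−1)²/(n−2)²) I_n², the inequality ‖u‖²_{L^{2n/(n−2)}(X,ν)} ≤ C_n · H_m(u) holds for all u ∈ BV_m^0(X,ν), where H_m(u) := (1/2) ∫_X ∫_X (u(x) − u(y))² dm_x(y) dν(x) (both sides allowed to take the value +∞). -/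
/-!
Apply the Sobolev inequality to `w = v ^ c`, where `v = min |u| k` and `c = 2(n-1)/(n-2)`.
The chain rule `|w y - w x| ≤ c · max (v x) (v y) ^ (c-1) · |u y - u x|`, Cauchy–Schwarz for
`ν ⊗ m_x` and reversibility give `TV_m(w) ≤ c · ‖v‖_p ^ (c-1) · H_m(u) ^ (1/2)` with
`p = 2(c-1) = 2n/(n-2)`, while `‖w‖_{p/c} = ‖v‖_p ^ c` and `p/c = n/(n-1)`. Since `v` is bounded
with support of finite measure, `‖v‖_p` is finite and can be cancelled, so
`‖v‖_p ≤ I · c · H_m(u) ^ (1/2)`; Fatou's lemma lets `k → ∞`, and `c² ≤ 8(n-1)²/(n-2)²`.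
-/

open MeasureTheory ENNReal Filter Set Topology

lemma abs_rpow_sub_rpow_le {c : ℝ} (hc : 1 ≤ c) {a b : ℝ} (ha : 0 ≤ a) (hb : 0 ≤ b) :
    |a ^ c - b ^ c| ≤ c * max a b ^ (c - 1) * |a - b| := by
  have hc0 : 0 ≤ c := zero_le_one.trans hc
  have key := (convex_Icc 0 (max a b)).norm_image_sub_le_of_norm_hasDerivWithin_le
    (f := fun t : ℝ => t ^ c) (f' := fun t => c * t ^ (c - 1))
    (fun t _ => (Real.hasDerivAt_rpow_const (Or.inr hc)).hasDerivWithinAt)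
    (fun t ht => by
      rw [Real.norm_eq_abs, abs_of_nonneg (by have := ht.1; positivity)]
      exact mul_le_mul_of_nonneg_left (Real.rpow_le_rpow ht.1 ht.2 (by linarith)) hc0)
    ⟨hb, le_max_right a b⟩ ⟨ha, le_max_left a b⟩
  simpa only [Real.norm_eq_abs] using key

lemma max_rpow_le_rpow_add_rpow {a b : ℝ} (ha : 0 ≤ a) (hb : 0 ≤ b) (e : ℝ) :
    max a b ^ e ≤ a ^ e + b ^ e := by
  rcases le_total a b with h | h
  · simpa [max_eq_right h] using Real.rpow_nonneg ha e
  · simpa [max_eq_left h] using Real.rpow_nonneg hb e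

lemma abs_min_abs_sub_min_abs_le (a b k : ℝ) : |min |a| k - min |b| k| ≤ |a - b| := by
  have h := abs_min_sub_min_le_max |a| k |b| k
  rw [sub_self, abs_zero] at h
  exact h.trans (max_le (abs_abs_sub_abs_le_abs_sub a b) (abs_nonneg _))

lemma ENNReal.le_of_rpow_le_mul_rpow {a K : ℝ≥0∞} {c : ℝ} (hc : 1 < c) (ha : a ≠ ⊤)
    (h : a ^ c ≤ K * a ^ (c - 1)) : a ≤ K := by
  rcases eq_or_ne a 0 with rfl | ha0
  · exact zero_le
  have hpos : a ^ (c - 1) ≠ 0 := (ENNReal.rpow_pos (pos_iff_ne_zero.2 ha0) ha).ne'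
  have hfin : a ^ (c - 1) ≠ ⊤ := ENNReal.rpow_ne_top_of_nonneg (by linarith) ha
  rw [show c = 1 + (c - 1) by ring, ENNReal.rpow_add _ _ ha0 ha, ENNReal.rpow_one,
    add_sub_cancel_left] at h
  exact (ENNReal.mul_le_mul_iff_left hpos hfin).1 h

lemma ENNReal.ofReal_sq_le (x : ℝ) : ENNReal.ofReal x ^ 2 ≤ ENNReal.ofReal (x ^ 2) := by
  rcases le_total 0 x with hx | hx
  · rw [ENNReal.ofReal_pow hx]
  · simp [ENNReal.ofReal_of_nonpos hx]

lemma ENNReal.inv_two_mul_rpow_half_mul (a b : ℝ≥0∞) :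
    2⁻¹ * ((2 * a) ^ (1 / 2 : ℝ) * (2 * b) ^ (1 / 2 : ℝ)) = a ^ (1 / 2 : ℝ) * b ^ (1 / 2 : ℝ) := by
  have h2 : (2 : ℝ≥0∞) ^ (1 / 2 : ℝ) * 2 ^ (1 / 2 : ℝ) = 2 := by
    rw [← ENNReal.rpow_add _ _ two_ne_zero ENNReal.ofNat_ne_top]
    norm_num
  rw [ENNReal.mul_rpow_of_nonneg _ _ (by norm_num), ENNReal.mul_rpow_of_nonneg _ _ (by norm_num),
    mul_mul_mul_comm, h2, ← mul_assoc, ENNReal.inv_mul_cancel two_ne_zero ENNReal.ofNat_ne_top,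
    one_mul]

section RandomWalk

variable {X : Type*} [MeasurableSpace X] {m : X → Measure X} {ν : Measure X}

theorem eLpNorm_ofReal_eq_lintegral {q : ℝ} (hq : 0 < q) (f : X → ℝ) :
    eLpNorm f (ENNReal.ofReal q) ν = (∫⁻ x, ENNReal.ofReal (|f x| ^ q) ∂ν) ^ (1 / q) := by
  rw [eLpNorm_eq_lintegral_rpow_enorm_toReal (by simpa using hq) ENNReal.ofReal_ne_top,
    ENNReal.toReal_ofReal hq.le]
  congr 1
  refine lintegral_congr fun x => ?_
  rw [← ofReal_norm, Real.norm_eq_abs, ENNReal.ofReal_rpow_of_nonneg (abs_nonneg _) hq.le]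

theorem measurable_map_prodMk_of_measurableKernel (hprob : ∀ x, IsProbabilityMeasure (m x))
    (hker : MeasurableKernel m) : Measurable fun x => (m x).map (Prod.mk x) := by
  let κ : ProbabilityTheory.Kernel X X := ⟨m, Measure.measurable_of_measurable_coe m hker⟩
  have : ProbabilityTheory.IsMarkovKernel κ := ⟨hprob⟩
  refine Measure.measurable_of_measurable_coe _ fun s hs => ?_
  simp_rw [Measure.map_apply measurable_prodMk_left hs]
  exact ProbabilityTheory.Kernel.measurable_kernel_prodMk_left (κ := κ) hs

theorem lintegral_nuOtimes (hprob : ∀ x, IsProbabilityMeasure (m x)) (hker : MeasurableKernel m)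
    {g : X × X → ℝ≥0∞} (hg : Measurable g) :
    ∫⁻ z, g z ∂nuOtimes m ν = ∫⁻ x, ∫⁻ y, g (x, y) ∂m x ∂ν := by
  rw [nuOtimes, Measure.lintegral_bind
    (measurable_map_prodMk_of_measurableKernel hprob hker).aemeasurable hg.aemeasurable]
  exact lintegral_congr fun x => lintegral_map hg measurable_prodMk_left

theorem lintegral_lintegral_mul_le (hprob : ∀ x, IsProbabilityMeasure (m x))
    (hker : MeasurableKernel m) {F G : X → X → ℝ≥0∞}
    (hF : Measurable (Function.uncurry F)) (hG : Measurable (Function.uncurry G)) :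
    ∫⁻ x, ∫⁻ y, F x y * G x y ∂m x ∂ν ≤
      (∫⁻ x, ∫⁻ y, F x y ^ (2 : ℝ) ∂m x ∂ν) ^ (1 / 2 : ℝ) *
        (∫⁻ x, ∫⁻ y, G x y ^ (2 : ℝ) ∂m x ∂ν) ^ (1 / 2 : ℝ) := by
  have hint {g : X × X → ℝ≥0∞} (hg : Measurable g) :=
    (lintegral_nuOtimes (ν := ν) hprob hker hg).symm
  calc ∫⁻ x, ∫⁻ y, F x y * G x y ∂m x ∂ν
      = ∫⁻ z, Function.uncurry F z * Function.uncurry G z ∂nuOtimes m ν := hint (hF.mul hG)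
    _ ≤ _ := ENNReal.lintegral_mul_le_Lp_mul_Lq _ Real.HolderConjugate.two_two
        hF.aemeasurable hG.aemeasurable
    _ = _ := by rw [← hint (hF.pow_const _), ← hint (hG.pow_const _)]; rfl

theorem Reversible.lintegral_lintegral_add (hrev : Reversible m ν)
    (hprob : ∀ x, IsProbabilityMeasure (m x)) {ψ : X → ℝ≥0∞} (hψ : Measurable ψ) :
    ∫⁻ x, ∫⁻ y, (ψ x + ψ y) ∂m x ∂ν = 2 * ∫⁻ x, ψ x ∂ν := by
  have hconst : ∀ x, ∫⁻ _, ψ x ∂m x = ψ x := fun x => by simp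
  have hsnd : ∫⁻ x, ∫⁻ y, ψ y ∂m x ∂ν = ∫⁻ x, ψ x ∂ν := by
    rw [hrev (fun _ y => ψ y) (hψ.comp measurable_snd)]
    exact lintegral_congr hconst
  simp_rw [lintegral_add_left measurable_const, hconst]
  rw [lintegral_add_left hψ, hsnd, two_mul]

theorem Reversible.lintegral_lintegral_mul_max_rpow_sq_le (hrev : Reversible m ν)
    (hprob : ∀ x, IsProbabilityMeasure (m x)) {c : ℝ} (hc : 0 ≤ c) {v : X → ℝ}
    (hv : Measurable v) (hv0 : ∀ x, 0 ≤ v x) :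
    ∫⁻ x, ∫⁻ y, ENNReal.ofReal (c * max (v x) (v y) ^ (c - 1)) ^ (2 : ℝ) ∂m x ∂ν ≤
      2 * (ENNReal.ofReal (c ^ 2) * ∫⁻ x, ENNReal.ofReal (v x ^ (2 * (c - 1))) ∂ν) := by
  have hψ : Measurable fun x => ENNReal.ofReal (v x ^ (2 * (c - 1))) :=
    (hv.pow_const _).ennreal_ofReal
  calc ∫⁻ x, ∫⁻ y, ENNReal.ofReal (c * max (v x) (v y) ^ (c - 1)) ^ (2 : ℝ) ∂m x ∂ν
      ≤ ∫⁻ x, ∫⁻ y, ENNReal.ofReal (c ^ 2) * (ENNReal.ofReal (v x ^ (2 * (c - 1))) +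
          ENNReal.ofReal (v y ^ (2 * (c - 1)))) ∂m x ∂ν := by
        gcongr with x y
        have hmax : 0 ≤ max (v x) (v y) := (hv0 x).trans (le_max_left _ _)
        rw [ENNReal.ofReal_rpow_of_nonneg (by positivity) zero_le_two,
          ← ENNReal.ofReal_add (by have := hv0 x; positivity) (by have := hv0 y; positivity),
          ← ENNReal.ofReal_mul (sq_nonneg c), Real.mul_rpow hc (by positivity),
          ← Real.rpow_mul hmax, Real.rpow_two, mul_comm (c - 1)]
        gcongr
        exact max_rpow_le_rpow_add_rpow (hv0 x) (hv0 y) _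
    _ = 2 * (ENNReal.ofReal (c ^ 2) * ∫⁻ x, ENNReal.ofReal (v x ^ (2 * (c - 1))) ∂ν) := by
        simp_rw [lintegral_const_mul' _ _ ENNReal.ofReal_ne_top]
        rw [hrev.lintegral_lintegral_add hprob hψ, mul_left_comm]

theorem two_mul_Hm (u : X → ℝ) :
    2 * Hm m ν u = ∫⁻ x, ∫⁻ y, ENNReal.ofReal |u y - u x| ^ (2 : ℝ) ∂m x ∂ν := by
  rw [Hm, ← mul_assoc, ENNReal.mul_inv_cancel two_ne_zero ENNReal.ofNat_ne_top, one_mul]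
  refine lintegral_congr fun x => lintegral_congr fun y => ?_
  rw [ENNReal.ofReal_rpow_of_nonneg (abs_nonneg _) zero_le_two, Real.rpow_two, sq_abs,
    ← neg_sub, neg_sq]

theorem TVm_rpow_le (hprob : ∀ x, IsProbabilityMeasure (m x)) (hker : MeasurableKernel m)
    (hrev : Reversible m ν) {c : ℝ} (hc : 1 ≤ c) {u v : X → ℝ} (hu : Measurable u)
    (hv : Measurable v) (hv0 : ∀ x, 0 ≤ v x) (hvu : ∀ x y, |v y - v x| ≤ |u y - u x|) :
    TVm m ν (fun x => v x ^ c) ≤ ENNReal.ofReal c *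
      (∫⁻ x, ENNReal.ofReal (v x ^ (2 * (c - 1))) ∂ν) ^ (1 / 2 : ℝ) * Hm m ν u ^ (1 / 2 : ℝ) := by
  have hc0 : 0 ≤ c := zero_le_one.trans hc
  set J := ∫⁻ x, ENNReal.ofReal (v x ^ (2 * (c - 1))) ∂ν
  set F : X → X → ℝ≥0∞ := fun x y => ENNReal.ofReal (c * max (v x) (v y) ^ (c - 1))
  set G : X → X → ℝ≥0∞ := fun x y => ENNReal.ofReal |u y - u x|
  have hF : Measurable (Function.uncurry F) := ENNReal.measurable_ofReal.comp <|
    measurable_const.mul (((hv.comp measurable_fst).max (hv.comp measurable_snd)).pow_const _)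
  have hG : Measurable (Function.uncurry G) := ENNReal.measurable_ofReal.comp
    ((hu.comp measurable_snd).sub (hu.comp measurable_fst)).abs
  have hchain : ∀ x y, ENNReal.ofReal |v y ^ c - v x ^ c| ≤ F x y * G x y := fun x y => by
    rw [← ENNReal.ofReal_mul (by have := hv0 x; positivity)]
    refine ENNReal.ofReal_le_ofReal ((abs_rpow_sub_rpow_le hc (hv0 y) (hv0 x)).trans ?_)
    rw [max_comm]
    exact mul_le_mul_of_nonneg_left (hvu x y) (by have := hv0 x; positivity)
  have hF2 : ∫⁻ x, ∫⁻ y, F x y ^ (2 : ℝ) ∂m x ∂ν ≤ 2 * (ENNReal.ofReal (c ^ 2) * J) :=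
    hrev.lintegral_lintegral_mul_max_rpow_sq_le hprob hc0 hv hv0
  have hcJ : (ENNReal.ofReal (c ^ 2) * J) ^ (1 / 2 : ℝ) = ENNReal.ofReal c * J ^ (1 / 2 : ℝ) := by
    rw [ENNReal.mul_rpow_of_nonneg _ _ (by norm_num),
      ENNReal.ofReal_rpow_of_nonneg (sq_nonneg c) (by norm_num), ← Real.sqrt_eq_rpow,
      Real.sqrt_sq hc0]
  calc TVm m ν (fun x => v x ^ c)
      ≤ 2⁻¹ * ∫⁻ x, ∫⁻ y, F x y * G x y ∂m x ∂ν := by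
        unfold TVm nlEnergy
        gcongr with x y
        exact hchain x y
    _ ≤ 2⁻¹ * ((∫⁻ x, ∫⁻ y, F x y ^ (2 : ℝ) ∂m x ∂ν) ^ (1 / 2 : ℝ) *
          (∫⁻ x, ∫⁻ y, G x y ^ (2 : ℝ) ∂m x ∂ν) ^ (1 / 2 : ℝ)) := by
        gcongr
        exact lintegral_lintegral_mul_le hprob hker hF hG
    _ ≤ 2⁻¹ * ((2 * (ENNReal.ofReal (c ^ 2) * J)) ^ (1 / 2 : ℝ) *
          (2 * Hm m ν u) ^ (1 / 2 : ℝ)) := by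
        rw [two_mul_Hm]
        gcongr
    _ = ENNReal.ofReal c * J ^ (1 / 2 : ℝ) * Hm m ν u ^ (1 / 2 : ℝ) := by
        rw [ENNReal.inv_two_mul_rpow_half_mul, hcJ]

theorem lintegral_lt_top_of_le_of_ae_eq_zero_off {f : X → ℝ≥0∞} {C : ℝ≥0∞} (hC : C ≠ ⊤)
    {A : Set X} (hA : MeasurableSet A) (hνA : ν A ≠ ⊤) (hfC : ∀ x, f x ≤ C)
    (hf0 : ∀ᵐ x ∂ν, x ∉ A → f x = 0) : ∫⁻ x, f x ∂ν < ⊤ :=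
  calc ∫⁻ x, f x ∂ν ≤ ∫⁻ x, A.indicator (fun _ => C) x ∂ν := by
        refine lintegral_mono_ae ?_
        filter_upwards [hf0] with x hx
        by_cases hxA : x ∈ A
        · simpa [hxA] using hfC x
        · simp [hxA, hx hxA]
    _ = C * ν A := lintegral_indicator_const hA C
    _ < ⊤ := ENNReal.mul_lt_top hC.lt_top hνA.lt_top

theorem MemBVm0.of_abs_sub_le {u w : X → ℝ} (hu : MemBVm0 m ν u) (hw : Measurable w) {L : ℝ}
    (hwu : ∀ x y, |w y - w x| ≤ L * |u y - u x|) (hw0 : ∀ x, u x = 0 → w x = 0) :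
    MemBVm0 m ν w := by
  obtain ⟨⟨-, hE⟩, A, hA, hA0, hAlt, hAu⟩ := hu
  refine ⟨⟨hw, ?_⟩, A, hA, hA0, hAlt, ?_⟩
  · calc nlEnergy m ν w ≤ ENNReal.ofReal L * nlEnergy m ν u := by
          unfold nlEnergy
          rw [← lintegral_const_mul' _ _ ENNReal.ofReal_ne_top]
          gcongr with x
          rw [← lintegral_const_mul' _ _ ENNReal.ofReal_ne_top]
          gcongr with y
          rw [← ENNReal.ofReal_mul' (abs_nonneg _)]
          exact ENNReal.ofReal_le_ofReal (hwu x y)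
      _ < ⊤ := ENNReal.mul_lt_top ENNReal.ofReal_lt_top hE
  · filter_upwards [hAu] with x hx hxA using hw0 x (hx hxA)

theorem MemBVm0.rpow_of_contraction {c : ℝ} (hc : 1 ≤ c) {u v : X → ℝ} (hu : MemBVm0 m ν u)
    (hv : Measurable v) (hv0 : ∀ x, 0 ≤ v x) {M : ℝ} (hvM : ∀ x, v x ≤ M)
    (hvu : ∀ x y, |v y - v x| ≤ |u y - u x|) (hv_zero : ∀ x, u x = 0 → v x = 0) :
    MemBVm0 m ν (fun x => v x ^ c) := by
  refine hu.of_abs_sub_le (hv.pow_const c) (L := c * M ^ (c - 1)) (fun x y => ?_)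
    (fun x hx => by simp [hv_zero x hx, Real.zero_rpow (by linarith : c ≠ 0)])
  have hmax : 0 ≤ max (v y) (v x) := (hv0 y).trans (le_max_left _ _)
  have hM : 0 ≤ M := (hv0 x).trans (hvM x)
  calc |v y ^ c - v x ^ c| ≤ c * max (v y) (v x) ^ (c - 1) * |v y - v x| :=
        abs_rpow_sub_rpow_le hc (hv0 y) (hv0 x)
    _ ≤ c * M ^ (c - 1) * |u y - u x| := by
        refine mul_le_mul ?_ (hvu x y) (abs_nonneg _) (by positivity)
        exact mul_le_mul_of_nonneg_left
          (Real.rpow_le_rpow hmax (max_le (hvM y) (hvM x)) (by linarith)) (by linarith)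

theorem eLpNorm_le_of_forall_eLpNorm_min_abs_le {p : ℝ≥0∞} {u : X → ℝ} (hu : Measurable u)
    {B : ℝ≥0∞} (h : ∀ k : ℕ, eLpNorm (fun x => min |u x| k) p ν ≤ B) : eLpNorm u p ν ≤ B := by
  have hlim : ∀ x, Tendsto (fun k : ℕ => min |u x| k) atTop (𝓝 ‖u x‖) := fun x =>
    tendsto_atTop_of_eventually_const (i₀ := ⌈|u x|⌉₊) fun k hk =>
      min_eq_left (Nat.ceil_le.1 hk)
  calc eLpNorm u p ν = eLpNorm (fun x => ‖u x‖) p ν := (eLpNorm_norm u).symm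
    _ ≤ atTop.liminf fun k : ℕ => eLpNorm (fun x => min |u x| k) p ν :=
        Lp.eLpNorm_lim_le_liminf_eLpNorm
          (fun k => (hu.abs.min measurable_const).aestronglyMeasurable) _ (ae_of_all _ hlim)
    _ ≤ B := liminf_le_of_frequently_le' (Frequently.of_forall h)

theorem eLpNorm_le_of_sobolev_of_contraction (hprob : ∀ x, IsProbabilityMeasure (m x))
    (hker : MeasurableKernel m) (hrev : Reversible m ν) {c : ℝ} (hc : 1 < c) {K : ℝ≥0∞}
    (hsob : ∀ w, MemBVm0 m ν w →
      eLpNorm w (ENNReal.ofReal (2 * (c - 1) / c)) ν ≤ K * TVm m ν w)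
    {u v : X → ℝ} (hu : MemBVm0 m ν u) (hv : Measurable v) (hv0 : ∀ x, 0 ≤ v x) {M : ℝ}
    (hvM : ∀ x, v x ≤ M) (hvu : ∀ x y, |v y - v x| ≤ |u y - u x|)
    (hv_zero : ∀ x, u x = 0 → v x = 0) :
    eLpNorm v (ENNReal.ofReal (2 * (c - 1))) ν ≤ K * ENNReal.ofReal c * Hm m ν u ^ (1 / 2 : ℝ) := by
  set p := 2 * (c - 1)
  have hp : 0 < p := by positivity
  set J := ∫⁻ x, ENNReal.ofReal (v x ^ p) ∂ν
  have hJ : J ≠ ⊤ := by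
    obtain ⟨-, A, hA, -, hAlt, hAu⟩ := hu
    refine (lintegral_lt_top_of_le_of_ae_eq_zero_off ENNReal.ofReal_ne_top hA hAlt.ne_top
      (fun x => ENNReal.ofReal_le_ofReal (Real.rpow_le_rpow (hv0 x) (hvM x) hp.le)) ?_).ne
    filter_upwards [hAu] with x hx hxA
    simp [hv_zero x (hx hxA), Real.zero_rpow hp.ne']
  have hw : MemBVm0 m ν (fun x => v x ^ c) :=
    hu.rpow_of_contraction hc.le hv hv0 hvM hvu hv_zero
  have hNv : eLpNorm v (ENNReal.ofReal p) ν = J ^ (1 / p) := by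
    simp_rw [eLpNorm_ofReal_eq_lintegral hp, abs_of_nonneg (hv0 _), J]
  have hNw : eLpNorm (fun x => v x ^ c) (ENNReal.ofReal (p / c)) ν = (J ^ (1 / p)) ^ c := by
    rw [eLpNorm_ofReal_eq_lintegral (by positivity), ← ENNReal.rpow_mul]
    congr 1
    · refine lintegral_congr fun x => ?_
      rw [abs_of_nonneg (Real.rpow_nonneg (hv0 x) c), ← Real.rpow_mul (hv0 x),
        mul_div_cancel₀ _ (by positivity)]
    · field_simp
  have hJhalf : J ^ (1 / 2 : ℝ) = (J ^ (1 / p)) ^ (c - 1) := by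
    rw [← ENNReal.rpow_mul]
    congr 1
    field_simp
    rfl
  rw [hNv]
  refine ENNReal.le_of_rpow_le_mul_rpow hc (ENNReal.rpow_ne_top_of_nonneg (by positivity) hJ) ?_
  calc (J ^ (1 / p)) ^ c = eLpNorm (fun x => v x ^ c) (ENNReal.ofReal (p / c)) ν := hNw.symm
    _ ≤ K * TVm m ν (fun x => v x ^ c) := hsob _ hw
    _ ≤ K * (ENNReal.ofReal c * J ^ (1 / 2 : ℝ) * Hm m ν u ^ (1 / 2 : ℝ)) := by
        gcongr
        exact TVm_rpow_le hprob hker hrev hc.le hu.1.1 hv hv0 hvu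
    _ = K * ENNReal.ofReal c * Hm m ν u ^ (1 / 2 : ℝ) * (J ^ (1 / p)) ^ (c - 1) := by
        rw [hJhalf]
        ring

theorem eLpNorm_le_mul_Hm_rpow_half_of_sobolev (hprob : ∀ x, IsProbabilityMeasure (m x))
    (hker : MeasurableKernel m) (hrev : Reversible m ν) {c : ℝ} (hc : 1 < c) {K : ℝ≥0∞}
    (hsob : ∀ w, MemBVm0 m ν w →
      eLpNorm w (ENNReal.ofReal (2 * (c - 1) / c)) ν ≤ K * TVm m ν w)
    {u : X → ℝ} (hu : MemBVm0 m ν u) :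
    eLpNorm u (ENNReal.ofReal (2 * (c - 1))) ν ≤ K * ENNReal.ofReal c * Hm m ν u ^ (1 / 2 : ℝ) :=
  eLpNorm_le_of_forall_eLpNorm_min_abs_le hu.1.1 fun k =>
    eLpNorm_le_of_sobolev_of_contraction hprob hker hrev hc hsob hu
      (hu.1.1.abs.min measurable_const) (fun x => le_min (abs_nonneg _) k.cast_nonneg)
      (fun x => min_le_right _ _) (fun x y => abs_min_abs_sub_min_abs_le _ _ _)
      (fun x hx => by simp [hx])

end RandomWalk

theorem sobolev_implies_dirichlet_sobolev_general
    {X : Type*} [MeasurableSpace X]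
    (m : X → Measure X) (hprob : ∀ x, IsProbabilityMeasure (m x))
    (hker : MeasurableKernel m)
    (ν : Measure X) (hrev : Reversible m ν)
    (n : ℝ) (hn : 2 < n) (I : ℝ)
    (hsob : ∀ u : X → ℝ, MemBVm0 m ν u →
      eLpNorm u (ENNReal.ofReal (n / (n - 1))) ν ≤ ENNReal.ofReal I * TVm m ν u) :
    ∀ u : X → ℝ, MemBVm0 m ν u →
      (eLpNorm u (ENNReal.ofReal (2 * n / (n - 2))) ν) ^ 2 ≤
        ENNReal.ofReal (8 * (n - 1) ^ 2 / (n - 2) ^ 2 * I ^ 2) * Hm m ν u := by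
  intro u hu
  have hn2 : 0 < n - 2 := by linarith
  set c := 2 * (n - 1) / (n - 2)
  have hc : 1 < c := by rw [lt_div_iff₀ hn2]; linarith
  have hp : 2 * (c - 1) = 2 * n / (n - 2) := by simp only [c]; field_simp; ring
  have hq : 2 * (c - 1) / c = n / (n - 1) := by
    rw [hp, div_div_div_cancel_right₀ hn2.ne']; field_simp
  have key := eLpNorm_le_mul_Hm_rpow_half_of_sobolev hprob hker hrev hc
    (by rwa [hq]) hu
  have hconst : (ENNReal.ofReal I * ENNReal.ofReal c) ^ 2 ≤
      ENNReal.ofReal (8 * (n - 1) ^ 2 / (n - 2) ^ 2 * I ^ 2) := by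
    rw [← ENNReal.ofReal_mul' (by positivity)]
    refine (ENNReal.ofReal_sq_le _).trans (ENNReal.ofReal_le_ofReal ?_)
    rw [mul_pow, div_pow, mul_comm]
    gcongr
    nlinarith [sq_nonneg (n - 1)]
  calc eLpNorm u (ENNReal.ofReal (2 * n / (n - 2))) ν ^ 2
      ≤ (ENNReal.ofReal I * ENNReal.ofReal c * Hm m ν u ^ (1 / 2 : ℝ)) ^ 2 := by
        rw [← hp]; gcongr
    _ = (ENNReal.ofReal I * ENNReal.ofReal c) ^ 2 * Hm m ν u := by
        rw [mul_pow, ← ENNReal.rpow_natCast (Hm m ν u ^ _), ← ENNReal.rpow_mul]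
        norm_num
    _ ≤ _ := by gcongr

/-- If the Sobolev inequality `‖u‖_{L^{n/(n−1)}} ≤ I·TV_m(u)` holds on `BV_m^0(X,ν)` for
some `n > 2`, then with `C := 8(n−1)²/(n−2)² · I²` one has
`‖u‖²_{L^{2n/(n−2)}} ≤ C · H_m(u)` for all `u ∈ BV_m^0(X,ν)`. -/
theorem sobolev_implies_dirichlet_sobolev
    {X : Type*} [MetricSpace X] [PolishSpace X] [MeasurableSpace X] [BorelSpace X]
    (m : X → Measure X) (hprob : ∀ x, IsProbabilityMeasure (m x))
    (hker : MeasurableKernel m)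
    (ν : Measure X) [SigmaFinite ν] (hrev : Reversible m ν)
    (n : ℝ) (hn : 2 < n) (I : ℝ) (hI : 0 < I)
    (hsob : ∀ u : X → ℝ, MemBVm0 m ν u →
      eLpNorm u (ENNReal.ofReal (n / (n - 1))) ν ≤ ENNReal.ofReal I * TVm m ν u) :
    ∀ u : X → ℝ, MemBVm0 m ν u →
      (eLpNorm u (ENNReal.ofReal (2 * n / (n - 2))) ν) ^ 2 ≤
        ENNReal.ofReal (8 * (n - 1) ^ 2 / (n - 2) ^ 2 * I ^ 2) * Hm m ν u :=
  sobolev_implies_dirichlet_sobolev_general m hprob hker ν hrev n hn I hsob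
end

section
/- Let [X,d,m] be a metric random walk space with an invariant and reversible probability measure ν which is ergodic, and suppose m_x ≪ ν for all x ∈ X. Let q ≥ 1 and let (u_n) ⊂ L^q(X,ν) be a sequence bounded in L¹(X,ν) with lim_{n→∞} ∫_X ∫_X |u_n(y) − u_n(x)|^q dm_x(y) dν(x) = 0. Then there exist λ ∈ ℝ and a subsequence (u_{n_k}) such that u_{n_k}(x) → λ for ν-a.e. x ∈ X, and ‖u_{n_k} − λ‖_{L^q(X, m_x)} → 0 for ν-a.e. x ∈ X. -/
open MeasureTheory ENNReal Filter Set Topology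

/-!
Pass to a subsequence along which the energies are summable. Then for `ν`-a.e. `x` the local
energies `∫ |u_k(y) - u_k(x)|^q dm_x(y)` are summable as well, so `u_k(y) - u_k(x) → 0` for
`m_x`-a.e. `y` and in `L^q(m_x)`. By Fatou, `L¹`-boundedness gives a point `x₀` of this good set
at which a further subsequence converges, to `λ` say. The set `B` of good points at which the
subsequence tends to `λ` is invariant under the walk (`m_x(B) = 1` for `x ∈ B`, because
`m_x ≪ ν`), and `m_{x₀}(B) = 1` rules out `ν(B) = 0`, so ergodicity gives `ν(B) = 1`.
-/

open ProbabilityTheory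

namespace ENNReal

theorem exists_strictMono_tsum_ne_top {a : ℕ → ℝ≥0∞} (ha : Tendsto a atTop (𝓝 0)) :
    ∃ φ : ℕ → ℕ, StrictMono φ ∧ ∑' k, a (φ k) ≠ ∞ := by
  obtain ⟨φ, hφ, hle⟩ := extraction_forall_of_eventually' fun k : ℕ =>
    ENNReal.tendsto_atTop_zero.mp ha (2⁻¹ ^ k) (ENNReal.pow_pos (by norm_num) k)
  refine ⟨φ, hφ, ne_top_of_le_ne_top ?_ (ENNReal.tsum_le_tsum hle)⟩
  simp [ENNReal.tsum_geometric, ENNReal.one_sub_inv_two]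

theorem tendsto_zero_of_tendsto_rpow {ι : Type*} {l : Filter ι} {a : ι → ℝ≥0∞} {q : ℝ}
    (hq : 0 < q) (h : Tendsto (fun i => a i ^ q) l (𝓝 0)) : Tendsto a l (𝓝 0) := by
  simpa [← ENNReal.rpow_mul, mul_inv_cancel₀ hq.ne', ENNReal.zero_rpow_of_pos (inv_pos.2 hq)]
    using h.ennrpow_const q⁻¹

end ENNReal

namespace MeasureTheory

variable {α E : Type*} [MeasurableSpace α] {μ : Measure α} [NormedAddCommGroup E]

theorem ae_tendsto_zero_of_tsum_lintegral_ne_top {g : ℕ → α → ℝ≥0∞}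
    (hg : ∀ k, AEMeasurable (g k) μ) (hsum : ∑' k, ∫⁻ y, g k y ∂μ ≠ ∞) :
    ∀ᵐ y ∂μ, Tendsto (fun k => g k y) atTop (𝓝 0) := by
  rw [← lintegral_tsum hg] at hsum
  filter_upwards [ae_lt_top' (AEMeasurable.tsum hg) hsum] with y hy
  exact ENNReal.tendsto_atTop_zero_of_tsum_ne_top hy.ne

theorem ae_tendsto_zero_of_tsum_lintegral_enorm_rpow_ne_top {q : ℝ} (hq : 0 < q)
    {f : ℕ → α → E} (hf : ∀ k, AEStronglyMeasurable (f k) μ)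
    (hsum : ∑' k, ∫⁻ y, ‖f k y‖ₑ ^ q ∂μ ≠ ∞) :
    ∀ᵐ y ∂μ, Tendsto (fun k => f k y) atTop (𝓝 0) := by
  filter_upwards [ae_tendsto_zero_of_tsum_lintegral_ne_top
    (fun k => (hf k).enorm.pow_const q) hsum] with y hy
  exact tendsto_zero_iff_enorm_tendsto_zero.2 (ENNReal.tendsto_zero_of_tendsto_rpow hq hy)

theorem eLpNorm_ofReal_rpow_eq_lintegral {q : ℝ} (hq : 0 < q) (f : α → E) :
    eLpNorm f (ENNReal.ofReal q) μ ^ q = ∫⁻ y, ‖f y‖ₑ ^ q ∂μ := by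
  have h := eLpNorm_nnreal_pow_eq_lintegral (μ := μ) (f := f) (p := q.toNNReal)
    (by simpa using hq)
  rwa [Real.coe_toNNReal q hq.le] at h

theorem tendsto_eLpNorm_zero_of_tsum_lintegral_enorm_rpow_ne_top {q : ℝ} (hq : 0 < q)
    {f : ℕ → α → E} (hsum : ∑' k, ∫⁻ y, ‖f k y‖ₑ ^ q ∂μ ≠ ∞) :
    Tendsto (fun k => eLpNorm (f k) (ENNReal.ofReal q) μ) atTop (𝓝 0) := by
  refine ENNReal.tendsto_zero_of_tendsto_rpow hq ?_
  simp_rw [eLpNorm_ofReal_rpow_eq_lintegral hq]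
  exact ENNReal.tendsto_atTop_zero_of_tsum_ne_top hsum

theorem tendsto_eLpNorm_sub_of_tendsto [IsFiniteMeasure μ] {p : ℝ≥0∞} (hp : 1 ≤ p)
    {ι : Type*} {l : Filter ι} {f : ι → α → E} (hf : ∀ i, AEStronglyMeasurable (f i) μ)
    {c : ι → E} {a : E} (hc : Tendsto c l (𝓝 a))
    (h : Tendsto (fun i => eLpNorm (fun y => f i y - c i) p μ) l (𝓝 0)) :
    Tendsto (fun i => eLpNorm (fun y => f i y - a) p μ) l (𝓝 0) := by
  have hconst : Tendsto (fun i => ‖c i - a‖ₑ • μ univ ^ p.toReal⁻¹) l (𝓝 0) := by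
    have hca : Tendsto (fun i => ‖c i - a‖ₑ) l (𝓝 0) :=
      tendsto_zero_iff_enorm_tendsto_zero.1 (by simpa using hc.sub_const a)
    have hfin : μ univ ^ p.toReal⁻¹ ≠ ∞ :=
      ENNReal.rpow_ne_top_of_nonneg (by positivity) (measure_ne_top μ univ)
    simpa using ENNReal.Tendsto.mul_const hca (.inr hfin)
  refine tendsto_of_tendsto_of_tendsto_of_le_of_le tendsto_const_nhds
    (by simpa using h.add hconst) (fun _ => bot_le) fun i => ?_
  calc eLpNorm (fun y => f i y - a) p μ
      = eLpNorm ((fun y => f i y - c i) + fun _ => c i - a) p μ := by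
        congr 1; ext y; exact (sub_add_sub_cancel _ _ _).symm
    _ ≤ eLpNorm (fun y => f i y - c i) p μ + eLpNorm (fun _ => c i - a) p μ :=
        eLpNorm_add_le ((hf i).sub aestronglyMeasurable_const) aestronglyMeasurable_const hp
    _ ≤ _ := by gcongr; exact eLpNorm_le_of_ae_enorm_bound (.of_forall fun _ => le_rfl)

theorem ae_exists_subseq_tendsto_of_eLpNorm_one_le {f : ℕ → α → ℝ}
    (hf : ∀ k, Measurable (f k)) {C : ℝ≥0∞} (hC : C ≠ ∞)
    (hbdd : ∀ k, eLpNorm (f k) 1 μ ≤ C) :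
    ∀ᵐ x ∂μ, ∃ (a : ℝ) (ψ : ℕ → ℕ), StrictMono ψ ∧
      Tendsto (fun k => f (ψ k) x) atTop (𝓝 a) := by
  have hfatou : ∫⁻ x, liminf (fun k => ‖f k x‖ₑ) atTop ∂μ ≠ ∞ := by
    refine ne_top_of_le_ne_top hC ((lintegral_liminf_le fun k => (hf k).enorm).trans ?_)
    refine liminf_le_of_frequently_le (.of_forall fun k => ?_)
    simpa [eLpNorm_one_eq_lintegral_enorm] using hbdd k
  filter_upwards [ae_lt_top (Measurable.liminf fun k => (hf k).enorm) hfatou] with x hx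
  obtain ⟨R, hRlim, hR⟩ := exists_between hx
  have hfreq : ∃ᶠ k in atTop, f k x ∈ Metric.closedBall 0 R.toReal := by
    refine (frequently_lt_of_liminf_lt (h := hRlim)).mono fun k hk => ?_
    rw [Metric.mem_closedBall, dist_zero_right, ← ENNReal.ofReal_le_iff_le_toReal hR.ne,
      ofReal_norm]
    exact hk.le
  obtain ⟨a, -, ψ, hψ, hlim⟩ :=
    tendsto_subseq_of_frequently_bounded Metric.isBounded_closedBall hfreq
  exact ⟨a, ψ, hψ, hlim⟩

section RandomWalk

variable {X : Type*} [MeasurableSpace X] {m : X → Measure X} {ν : Measure X}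

theorem MeasurableKernel.measurable_lintegral (hker : MeasurableKernel m)
    (hprob : ∀ x, IsProbabilityMeasure (m x)) {F : X → X → ℝ≥0∞}
    (hF : Measurable (Function.uncurry F)) : Measurable fun x => ∫⁻ y, F x y ∂m x := by
  let κ : Kernel X X := ⟨m, Measure.measurable_of_measurable_coe m hker⟩
  have : IsMarkovKernel κ := ⟨hprob⟩
  exact hF.lintegral_kernel_prod_right (κ := κ)

theorem ErgodicRW.measure_eq_one (herg : ErgodicRW m ν) {B : Set X} (hB : MeasurableSet B)
    (hinv : ∀ x ∈ B, m x B = 1) {x₀ : X} (hx₀ : x₀ ∈ B) (habs : m x₀ ≪ ν) :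
    ν B = 1 :=
  (herg B hB hinv).resolve_left fun h => by simpa [hinv x₀ hx₀] using habs h

theorem ErgodicRW.ae_tendsto_of_tendsto [IsProbabilityMeasure ν] (herg : ErgodicRW m ν)
    (hprob : ∀ x, IsProbabilityMeasure (m x)) (habs : ∀ x, m x ≪ ν)
    {f : ℕ → X → ℝ} (hf : ∀ k, Measurable (f k)) {D : Set X} (hD : MeasurableSet D)
    (hDν : ∀ᵐ x ∂ν, x ∈ D)
    (hstep : ∀ x ∈ D, ∀ᵐ y ∂m x, Tendsto (fun k => f k y - f k x) atTop (𝓝 0))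
    {x₀ : X} (hx₀ : x₀ ∈ D) {a : ℝ} (ha : Tendsto (fun k => f k x₀) atTop (𝓝 a)) :
    ∀ᵐ x ∂ν, x ∈ D ∧ Tendsto (fun k => f k x) atTop (𝓝 a) := by
  set B := D ∩ {x | Tendsto (fun k => f k x) atTop (𝓝 a)}
  have hB : MeasurableSet B := hD.inter (measurableSet_tendsto _ hf)
  have hinv : ∀ x ∈ B, m x B = 1 := by
    intro x hx
    have := hprob x
    rw [← prob_compl_eq_zero_iff hB, ← mem_ae_iff]
    filter_upwards [habs x hDν, hstep x hx.1] with y hyD hy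
    exact ⟨hyD, by simpa using hy.add hx.2⟩
  exact mem_ae_iff.2 ((prob_compl_eq_zero_iff hB).2
    (herg.measure_eq_one hB hinv ⟨hx₀, ha⟩ (habs x₀)))

end RandomWalk

end MeasureTheory

theorem poincare_key_lemma_general
    {X : Type*} [MeasurableSpace X]
    (m : X → Measure X) (hprob : ∀ x, IsProbabilityMeasure (m x))
    (hker : MeasurableKernel m)
    (ν : Measure X) [IsProbabilityMeasure ν]
    (herg : ErgodicRW m ν) (habs : ∀ x, m x ≪ ν)
    (q : ℝ) (hq : 1 ≤ q)
    (u : ℕ → X → ℝ) (humeas : ∀ n, Measurable (u n))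
    (hbdd : ∃ C : ℝ, ∀ n, eLpNorm (u n) 1 ν ≤ ENNReal.ofReal C)
    (hlim : Tendsto
      (fun n => ∫⁻ x, ∫⁻ y, ENNReal.ofReal (|u n y - u n x| ^ q) ∂(m x) ∂ν)
      atTop (𝓝 0)) :
    ∃ (lam : ℝ) (φ : ℕ → ℕ), StrictMono φ ∧
      (∀ᵐ x ∂ν, Tendsto (fun k => u (φ k) x) atTop (𝓝 lam)) ∧
      (∀ᵐ x ∂ν, Tendsto
        (fun k => eLpNorm (fun y => u (φ k) y - lam) (ENNReal.ofReal q) (m x))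
        atTop (𝓝 0)) := by
  obtain ⟨C, hC⟩ := hbdd
  have hq0 : 0 < q := by linarith
  simp only [← ENNReal.ofReal_rpow_of_nonneg (abs_nonneg _) hq0.le,
    ← Real.enorm_eq_ofReal_abs] at hlim
  obtain ⟨φ, hφ, hsum⟩ := ENNReal.exists_strictMono_tsum_ne_top hlim
  set v : ℕ → X → ℝ := fun k => u (φ k)
  have hmeas : ∀ k, Measurable fun x => ∫⁻ y, ‖v k y - v k x‖ₑ ^ q ∂m x := fun k =>
    hker.measurable_lintegral hprob (by fun_prop)
  set D := {x | ∑' k, ∫⁻ y, ‖v k y - v k x‖ₑ ^ q ∂m x < ∞}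
  have hD : MeasurableSet D := measurableSet_lt (.tsum hmeas) measurable_const
  have hDν : ∀ᵐ x ∂ν, x ∈ D :=
    ae_lt_top (.tsum hmeas) (by rwa [lintegral_tsum fun k => (hmeas k).aemeasurable])
  obtain ⟨x₀, hx₀, a, ψ, hψ, ha⟩ := (hDν.and (ae_exists_subseq_tendsto_of_eLpNorm_one_le
    (fun k => humeas (φ k)) ofReal_ne_top fun k => hC (φ k))).exists
  have hstep : ∀ x ∈ D, ∀ᵐ y ∂m x, Tendsto (fun k => v k y - v k x) atTop (𝓝 0) :=
    fun x hx => ae_tendsto_zero_of_tsum_lintegral_enorm_rpow_ne_top hq0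
      (fun k => ((humeas (φ k)).sub_const _).aestronglyMeasurable) hx.ne
  have hgood := herg.ae_tendsto_of_tendsto hprob habs (f := fun k => v (ψ k))
    (fun k => humeas _) hD hDν
    (fun x hx => (hstep x hx).mono fun y hy => hy.comp hψ.tendsto_atTop) hx₀ ha
  refine ⟨a, φ ∘ ψ, hφ.comp hψ, hgood.mono fun x hx => hx.2, hgood.mono fun x hx => ?_⟩
  have := hprob x
  have hLq := (tendsto_eLpNorm_zero_of_tsum_lintegral_enorm_rpow_ne_top (μ := m x) hq0
    hx.1.ne).comp hψ.tendsto_atTop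
  exact tendsto_eLpNorm_sub_of_tendsto (ENNReal.one_le_ofReal.2 hq)
    (fun k => (humeas _).aestronglyMeasurable) hx.2 hLq

/-- If `ν` is an ergodic invariant and reversible probability measure with `m_x ≪ ν`
for all `x`, `q ≥ 1`, and `(u_n) ⊂ L^q(X,ν)` is bounded in `L¹(X,ν)` with
`∫∫ |u_n(y) − u_n(x)|^q dm_x(y) dν(x) → 0`, then there exist `λ ∈ ℝ` and a subsequence
along which `u_n → λ` `ν`-a.e. and `‖u_n − λ‖_{L^q(X,m_x)} → 0` for `ν`-a.e. `x`. -/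
theorem poincare_key_lemma
    {X : Type*} [MetricSpace X] [PolishSpace X] [MeasurableSpace X] [BorelSpace X]
    (m : X → Measure X) (hprob : ∀ x, IsProbabilityMeasure (m x))
    (hker : MeasurableKernel m)
    (ν : Measure X) [IsProbabilityMeasure ν] (hrev : Reversible m ν)
    (herg : ErgodicRW m ν) (habs : ∀ x, m x ≪ ν)
    (q : ℝ) (hq : 1 ≤ q)
    (u : ℕ → X → ℝ) (humeas : ∀ n, Measurable (u n))
    (huq : ∀ n, MemLp (u n) (ENNReal.ofReal q) ν)
    (hbdd : ∃ C : ℝ, ∀ n, eLpNorm (u n) 1 ν ≤ ENNReal.ofReal C)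
    (hlim : Tendsto
      (fun n => ∫⁻ x, ∫⁻ y, ENNReal.ofReal (|u n y - u n x| ^ q) ∂(m x) ∂ν)
      atTop (𝓝 0)) :
    ∃ (lam : ℝ) (φ : ℕ → ℕ), StrictMono φ ∧
      (∀ᵐ x ∂ν, Tendsto (fun k => u (φ k) x) atTop (𝓝 lam)) ∧
      (∀ᵐ x ∂ν, Tendsto
        (fun k => eLpNorm (fun y => u (φ k) y - lam) (ENNReal.ofReal q) (m x))
        atTop (𝓝 0)) :=
  poincare_key_lemma_general m hprob hker ν herg habs q hq u humeas hbdd hlim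
end
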